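/- arXiv:1705.10395 — 6 statements merged into one kernel-verified Lean document; each statement's English description precedes it below -/
import Mathlib

section
/- Let K be an algebraic closure of 𝔽₃ and let f̄ ∈ 𝔽₃[x₁,…,x₅] be the reduction of f modulo 3. The only point a ∈ K⁵ at which f̄ and all five partial derivatives ∂f̄/∂x₁, …, ∂f̄/∂x₅ vanish simultaneously is a = (0,0,0,0,0). In other words, the projective cubic hypersurface X = {f̄ = 0} ⊂ ℙ⁴ is smooth over the algebraic closure of 𝔽₃ (the cubic X over ℤ has good reduction modulo 3). -/
open MvPolynomial

/-- The cubic form `f` of the paper, a homogeneous cubic in `ℤ[x₁,…,x₅]`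
(variables indexed `0,…,4`). -/
noncomputable def cubicF : MvPolynomial (Fin 5) ℤ :=
  X 0 ^ 3 + 2 * X 0 ^ 2 * X 1 + 2 * X 0 * X 1 ^ 2 + X 0 ^ 2 * X 2 + 2 * X 0 * X 1 * X 2
    + 2 * X 0 * X 2 ^ 2 + 2 * X 1 * X 2 ^ 2 + X 2 ^ 3 + X 0 ^ 2 * X 3 + 2 * X 0 * X 1 * X 3
    + X 1 ^ 2 * X 3 + X 1 * X 2 * X 3 + X 0 * X 3 ^ 2 + 2 * X 2 * X 3 ^ 2 + X 3 ^ 3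
    + X 1 ^ 2 * X 4 + 2 * X 1 * X 2 * X 4 + 2 * X 2 ^ 2 * X 4 + X 0 * X 3 * X 4
    + X 1 * X 3 * X 4 + X 3 ^ 2 * X 4 + X 1 * X 4 ^ 2 + 2 * X 3 * X 4 ^ 2 + X 4 ^ 3

/-- The reduction of `f` modulo 3. -/
noncomputable def cubicFbar : MvPolynomial (Fin 5) (ZMod 3) :=
  MvPolynomial.map (Int.castRingHom (ZMod 3)) cubicF

lemma pd_two_aux (i : Fin 5) : pderiv i (2 : MvPolynomial (Fin 5) ℤ) = 0 := by
  have h : (2 : MvPolynomial (Fin 5) ℤ) = C 2 := by simp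
  rw [h, pderiv_C]

set_option maxHeartbeats 2000000 in
/-- The cubic threefold `X` is smooth over the algebraic closure of `𝔽₃`:
the only common zero of `f̄` and its five partial derivatives in `K⁵`,
`K` the algebraic closure of `𝔽₃`, is the origin. -/
theorem cubic_smooth_over_F3bar :
    ∀ a : Fin 5 → AlgebraicClosure (ZMod 3),
      (MvPolynomial.aeval a cubicFbar = 0 ∧
        ∀ i : Fin 5, MvPolynomial.aeval a (MvPolynomial.pderiv i cubicFbar) = 0) →
      a = 0 := by
  rintro a ⟨hf, hd⟩
  have hc3 : (3 : AlgebraicClosure (ZMod 3)) = 0 := by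
    exact_mod_cast CharP.cast_eq_zero (AlgebraicClosure (ZMod 3)) 3
  have h0 := hd 0
  have h1 := hd 1
  have h2 := hd 2
  have h3 := hd 3
  have h4 := hd 4
  simp only [cubicFbar, pderiv_map, cubicF, map_add, map_mul, map_pow, pderiv_mul, pderiv_pow,
    pderiv_X, pd_two_aux, Pi.single_apply] at h0 h1 h2 h3 h4
  simp only [show ((1:Fin 5) = 0) ↔ False from by decide, show ((2:Fin 5) = 0) ↔ False from by decide,
    show ((3:Fin 5) = 0) ↔ False from by decide, show ((4:Fin 5) = 0) ↔ False from by decide,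
    show ((0:Fin 5) = 1) ↔ False from by decide, show ((2:Fin 5) = 1) ↔ False from by decide,
    show ((3:Fin 5) = 1) ↔ False from by decide, show ((4:Fin 5) = 1) ↔ False from by decide,
    show ((0:Fin 5) = 2) ↔ False from by decide, show ((1:Fin 5) = 2) ↔ False from by decide,
    show ((3:Fin 5) = 2) ↔ False from by decide, show ((4:Fin 5) = 2) ↔ False from by decide,
    show ((0:Fin 5) = 3) ↔ False from by decide, show ((1:Fin 5) = 3) ↔ False from by decide,
    show ((2:Fin 5) = 3) ↔ False from by decide, show ((4:Fin 5) = 3) ↔ False from by decide,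
    show ((0:Fin 5) = 4) ↔ False from by decide, show ((1:Fin 5) = 4) ↔ False from by decide,
    show ((2:Fin 5) = 4) ↔ False from by decide, show ((3:Fin 5) = 4) ↔ False from by decide,
    if_false, if_true, eq_self_iff_true] at h0 h1 h2 h3 h4
  norm_num at h0 h1 h2 h3 h4
  simp only [cubicFbar, cubicF, map_add, map_mul, map_pow, MvPolynomial.map_X, aeval_X,
    map_ofNat] at hf
  have hz4 : a 4 ^ 5 = 0 := by linear_combination (a 0 ^ 2 * a 1) * h0 + (a 0 ^ 2 * a 2) * h0 + (a 0 ^ 2 * a 3) * h0 + (2 * a 0 * a 1 * a 2) * h0 + (2 * a 0 * a 1 * a 3) * h0 + (a 0 * a 2 ^ 2) * h0 + (2 * a 0 * a 2 * a 4) * h0 + (a 0 * a 3 ^ 2) * h0 + (a 0 * a 3 * a 4) * h0 + (2 * a 1 ^ 2 * a 2) * h0 + (a 1 ^ 2 * a 3) * h0 + (2 * a 1 * a 2 * a 4) * h0 + (a 1 * a 3 ^ 2) * h0 + (2 * a 1 * a 3 * a 4) * h0 + (2 * a 2 ^ 2 * a 3) * h0 + (2 * a 2 ^ 2 * a 4)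 * h0 + (a 2 * a 3 ^ 2) * h0 + (2 * a 2 * a 3 * a 4) * h0 + (a 3 ^ 3) * h0 + (a 3 ^ 2 * a 4) * h0 + (a 3 * a 4 ^ 2) * h0 + (2 * a 4 ^ 3) * h0 + (2 * a 0 ^ 3) * h1 + (2 * a 0 ^ 2 * a 3) * h1 + (2 * a 0 ^ 2 * a 4) * h1 + (2 * a 0 * a 1 ^ 2) * h1 + (a 0 * a 1 * a 2) * h1 + (2 * a 0 * a 2 ^ 2) * h1 + (a 0 * a 2 * a 4) * h1 + (2 * a 0 * a 3 ^ 2) * h1 + (a 0 * a 4 ^ 2) * h1 + (2 * a 1 ^ 3) * h1 + (2 * a 1 ^ 2 * a 3) * h1 + (a 1 ^ 2 * a 4) * h1 + (a 1 * a 2 * a 3) * h1 + (a 1 * a 3 ^ 2) * h1 + (a 1 * a 4 ^ 2) * h1 + (2 * a 2 ^ 3) * h1 + (a 2 ^ 2 * a 3) * h1 + (2 * a 2 ^ 2 * a 4) * h1 + (2 * a 2 * a 3 ^ 2) * h1 + (a 2 * a 4 ^ 2) * h1 + (a 3 ^ 3) * h1 + (a 4 ^ 3) * h1 + (2 * a 0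 ^ 2 * a 2) * h2 + (a 0 ^ 2 * a 3) * h2 + (2 * a 0 * a 2 ^ 2) * h2 + (a 1 ^ 2 * a 2) * h2 + (2 * a 1 ^ 2 * a 3) * h2 + (2 * a 1 * a 2 * a 3) * h2 + (2 * a 1 * a 2 * a 4) * h2 + (2 * a 1 * a 3 ^ 2) * h2 + (2 * a 2 ^ 3) * h2 + (a 2 ^ 2 * a 4) * h2 + (a 3 ^ 3) * h2 + (2 * a 0 ^ 3) * h3 + (a 0 ^ 2 * a 2) * h3 + (a 0 ^ 2 * a 3) * h3 + (a 0 ^ 2 * a 4) * h3 + (a 0 * a 1 * a 2) * h3 + (a 0 * a 1 * a 3) * h3 + (a 0 * a 1 * a 4) * h3 + (a 0 * a 2 * a 3) * h3 + (2 * a 0 * a 2 * a 4) * h3 + (2 * a 1 ^ 2 * a 2) * h3 + (a 1 ^ 2 * a 3) * h3 + (a 1 * a 2 * a 3) * h3 + (2 * a 1 * a 2 * a 4) * h3 + (a 0 ^ 2 * a 2) * h4 + (2 * a 0 ^ 2 * a 3) * h4 + (2 * a 0 * a 2) * hf + (a 0 * a 3) * hf + (2 * a 0 * a 4) * hf + (2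 * a 1 ^ 2) * hf + (2 * a 1 * a 3) * hf + (2 * a 2 ^ 2) * hf + (a 2 * a 3) * hf + ((-1 * a 3 * a 4 ^ 4) + (-1 * a 3 ^ 2 * a 4 ^ 3) + (-1 * a 3 ^ 3 * a 4 ^ 2) + (-1 * a 3 ^ 4 * a 4) + (-1 * a 3 ^ 5) + (-1 * a 2 * a 4 ^ 4) + (-1 * a 2 * a 3 * a 4 ^ 3) + (-2 * a 2 * a 3 ^ 2 * a 4 ^ 2) + (-4 * a 2 * a 3 ^ 3 * a 4) + (-1 * a 2 * a 3 ^ 4) + (-4 * a 2 ^ 2 * a 4 ^ 3) + (-4 * a 2 ^ 2 * a 3 * a 4 ^ 2) + (-5 * a 2 ^ 2 * a 3 ^ 2 * a 4) + (-5 * a 2 ^ 2 * a 3 ^ 3) + (-4 * a 2 ^ 3 * a 4 ^ 2) + (-4 * a 2 ^ 3 * a 3 * a 4) + (-5 * a 2 ^ 3 * a 3 ^ 2) + (-9 * a 2 ^ 4 * a 4) + (-3 * a 2 ^ 4 * a 3) + (-4 * a 2 ^ 5) + (-1 * a 1 * a 4 ^ 4) + (-3 * a 1 * a 3 * a 4 ^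 3) + (-3 * a 1 * a 3 ^ 2 * a 4 ^ 2) + (-4 * a 1 * a 3 ^ 3 * a 4) + (-4 * a 1 * a 3 ^ 4) + (-4 * a 1 * a 2 * a 4 ^ 3) + (-5 * a 1 * a 2 * a 3 * a 4 ^ 2) + (-12 * a 1 * a 2 * a 3 ^ 2 * a 4) + (-8 * a 1 * a 2 * a 3 ^ 3) + (-6 * a 1 * a 2 ^ 2 * a 4 ^ 2) + (-15 * a 1 * a 2 ^ 2 * a 3 * a 4) + (-8 * a 1 * a 2 ^ 2 * a 3 ^ 2) + (-10 * a 1 * a 2 ^ 3 * a 4) + (-8 * a 1 * a 2 ^ 3 * a 3) + (-4 * a 1 * a 2 ^ 4) + (-3 * a 1 ^ 2 * a 4 ^ 3) + (-5 * a 1 ^ 2 * a 3 * a 4 ^ 2) + (-7 * a 1 ^ 2 * a 3 ^ 2 * a 4) + (-6 * a 1 ^ 2 * a 3 ^ 3) + (-4 * a 1 ^ 2 * a 2 * a 4 ^ 2) + (-15 * a 1 ^ 2 * a 2 * a 3 * a 4) + (-13 * a 1 ^ 2 * a 2 * a 3 ^ 2) + (-10 * a 1 ^ 2 * a 2 ^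 2 * a 4) + (-13 * a 1 ^ 2 * a 2 ^ 2 * a 3) + (-3 * a 1 ^ 2 * a 2 ^ 3) + (-2 * a 1 ^ 3 * a 4 ^ 2) + (-7 * a 1 ^ 3 * a 3 * a 4) + (-4 * a 1 ^ 3 * a 3 ^ 2) + (-6 * a 1 ^ 3 * a 2 * a 4) + (-7 * a 1 ^ 3 * a 2 * a 3) + (-6 * a 1 ^ 3 * a 2 ^ 2) + (-2 * a 1 ^ 4 * a 4) + (-3 * a 1 ^ 4 * a 3) + (-2 * a 1 ^ 4 * a 2) + (-1 * a 0 * a 4 ^ 4) + (-4 * a 0 * a 3 * a 4 ^ 3) + (-3 * a 0 * a 3 ^ 2 * a 4 ^ 2) + (-3 * a 0 * a 3 ^ 3 * a 4) + (-2 * a 0 * a 3 ^ 4) + (-5 * a 0 * a 2 * a 4 ^ 3) + (-6 * a 0 * a 2 * a 3 * a 4 ^ 2) + (-9 * a 0 * a 2 * a 3 ^ 2 * a 4) + (-8 * a 0 * a 2 * a 3 ^ 3) + (-4 * a 0 * a 2 ^ 2 * a 4 ^ 2) + (-10 * a 0 * a 2 ^ 2 * a 3 * a 4) + (-11 * a 0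 * a 2 ^ 2 * a 3 ^ 2) + (-12 * a 0 * a 2 ^ 3 * a 4) + (-5 * a 0 * a 2 ^ 3 * a 3) + (-10 * a 0 * a 2 ^ 4) + (-6 * a 0 * a 1 * a 4 ^ 3) + (-5 * a 0 * a 1 * a 3 * a 4 ^ 2) + (-8 * a 0 * a 1 * a 3 ^ 2 * a 4) + (-9 * a 0 * a 1 * a 3 ^ 3) + (-7 * a 0 * a 1 * a 2 * a 4 ^ 2) + (-15 * a 0 * a 1 * a 2 * a 3 * a 4) + (-14 * a 0 * a 1 * a 2 * a 3 ^ 2) + (-18 * a 0 * a 1 * a 2 ^ 2 * a 4) + (-18 * a 0 * a 1 * a 2 ^ 2 * a 3) + (-12 * a 0 * a 1 * a 2 ^ 3) + (-3 * a 0 * a 1 ^ 2 * a 4 ^ 2) + (-7 * a 0 * a 1 ^ 2 * a 3 * a 4) + (-11 * a 0 * a 1 ^ 2 * a 3 ^ 2) + (-12 * a 0 * a 1 ^ 2 * a 2 * a 4) + (-18 * a 0 * a 1 ^ 2 * a 2 * a 3) + (-9 * a 0 * a 1 ^ 2 * a 2 ^ 2) + (-3 * a 0 * a 1 ^ 3 *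 a 4) + (-13 * a 0 * a 1 ^ 3 * a 3) + (-9 * a 0 * a 1 ^ 3 * a 2) + (-4 * a 0 * a 1 ^ 4) + (-4 * a 0 ^ 2 * a 4 ^ 3) + (-7 * a 0 ^ 2 * a 3 * a 4 ^ 2) + (-8 * a 0 ^ 2 * a 3 ^ 2 * a 4) + (-7 * a 0 ^ 2 * a 3 ^ 3) + (-5 * a 0 ^ 2 * a 2 * a 4 ^ 2) + (-14 * a 0 ^ 2 * a 2 * a 3 * a 4) + (-11 * a 0 ^ 2 * a 2 * a 3 ^ 2) + (-11 * a 0 ^ 2 * a 2 ^ 2 * a 4) + (-12 * a 0 ^ 2 * a 2 ^ 2 * a 3) + (-12 * a 0 ^ 2 * a 2 ^ 3) + (-4 * a 0 ^ 2 * a 1 * a 4 ^ 2) + (-11 * a 0 ^ 2 * a 1 * a 3 * a 4) + (-13 * a 0 ^ 2 * a 1 * a 3 ^ 2) + (-13 * a 0 ^ 2 * a 1 * a 2 * a 4) + (-15 * a 0 ^ 2 * a 1 * a 2 * a 3) + (-15 * a 0 ^ 2 * a 1 * a 2 ^ 2) + (-3 * a 0 ^ 2 * a 1 ^ 2 * a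 4) + (-13 * a 0 ^ 2 * a 1 ^ 2 * a 3) + (-13 * a 0 ^ 2 * a 1 ^ 2 * a 2) + (-6 * a 0 ^ 2 * a 1 ^ 3) + (-3 * a 0 ^ 3 * a 4 ^ 2) + (-6 * a 0 ^ 3 * a 3 * a 4) + (-8 * a 0 ^ 3 * a 3 ^ 2) + (-7 * a 0 ^ 3 * a 2 * a 4) + (-10 * a 0 ^ 3 * a 2 * a 3) + (-9 * a 0 ^ 3 * a 2 ^ 2) + (-7 * a 0 ^ 3 * a 1 * a 4) + (-11 * a 0 ^ 3 * a 1 * a 3) + (-9 * a 0 ^ 3 * a 1 * a 2) + (-4 * a 0 ^ 3 * a 1 ^ 2) + (-3 * a 0 ^ 4 * a 4) + (-6 * a 0 ^ 4 * a 3) + (-4 * a 0 ^ 4 * a 2) + (-5 * a 0 ^ 4 * a 1) + (-2 * a 0 ^ 5)) * hc3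
  have e4 : a 4 = 0 := (pow_eq_zero_iff (n := 5) (by norm_num)).mp hz4
  have hz1 : a 1 ^ 3 = 0 := by linear_combination (2 * a 0) * h0 + (2 * a 1) * h0 + (a 3) * h0 + (2 * a 0) * h1 + (a 1) * h1 + (a 3) * h2 + (2 * a 0) * h3 + (2 * a 1) * h3 + (a 2) * h3 + (2 * a 0) * h4 + (a 1) * h4 + ((-1 * a 3 ^ 2) + (-2 * a 2 * a 4) + (-6 * a 2 * a 3) + (-8 * a 1 * a 4) + (-13 * a 1 * a 3) + (-3 * a 1 * a 2) + (-6 * a 1 ^ 2) + (-12 * a 0 * a 4) + (-16 * a 0 * a 3) + (-5 * a 0 * a 2) + (-12 * a 0 * a 1) + (-2 * a 0 ^ 2)) * e4 + ((-1 * a 3 ^ 3) + (-1 * a 2 * a 3 ^ 2) + (-3 * a 2 ^ 2 * a 3) + (-4 * a 1 * a 3 ^ 2) + (-5 * a 1 * a 2 * a 3) + (-3 * a 1 * a 2 ^ 2) + (-3 * a 1 ^ 2 * a 3) + (-3 * a 1 ^ 2 * a 2) + (-2 * a 1 ^ 3) + (-4 * a 0 * a 3 ^ 2) + (-6 * a 0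 * a 2 * a 3) + (-4 * a 0 * a 2 ^ 2) + (-9 * a 0 * a 1 * a 3) + (-6 * a 0 * a 1 * a 2) + (-8 * a 0 * a 1 ^ 2) + (-6 * a 0 ^ 2 * a 3) + (-3 * a 0 ^ 2 * a 2) + (-10 * a 0 ^ 2 * a 1) + (-4 * a 0 ^ 3)) * hc3
  have e1 : a 1 = 0 := (pow_eq_zero_iff (n := 3) (by norm_num)).mp hz1
  have hz0 : a 0 ^ 3 = 0 := by linear_combination (a 3) * h0 + (2 * a 0) * h1 + (2 * a 3) * h1 + (2 * a 2) * h2 + (a 3) * h2 + ((-2 * a 3 * a 4) + (-3 * a 3 ^ 2) + (-8 * a 2 * a 3) + (-8 * a 2 ^ 2) + (-6 * a 1 * a 3) + (-4 * a 1 * a 2) + (-2 * a 0 * a 4) + (-2 * a 0 * a 3) + (-4 * a 0 * a 2) + (-4 * a 0 * a 1)) * e4 + ((-7 * a 3 ^ 2) + (-8 * a 2 * a 3) + (-8 * a 2 ^ 2) + (-2 * a 1 * a 3) + (-18 * a 0 * a 3) + (-4 * a 0 * a 2) + (-8 * a 0 ^ 2)) * e1 + ((-1 * a 3 ^ 3)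 + (-2 * a 2 * a 3 ^ 2) + (-3 * a 2 ^ 2 * a 3) + (-2 * a 2 ^ 3) + (-2 * a 0 * a 3 ^ 2) + (-4 * a 0 * a 2 * a 3) + (-4 * a 0 * a 2 ^ 2) + (-4 * a 0 ^ 2 * a 3) + (-2 * a 0 ^ 2 * a 2) + (-1 * a 0 ^ 3)) * hc3
  have e0 : a 0 = 0 := (pow_eq_zero_iff (n := 3) (by norm_num)).mp hz0
  have hz3 : a 3 ^ 2 = 0 := by linear_combination (2) * h2 + ((-8 * a 2) + (-4 * a 1)) * e4 + ((-2 * a 3) + (-8 * a 2) + (-4 * a 0)) * e1 + ((-8 * a 2) + (-2 * a 0)) * e0 + ((-1 * a 3 ^ 2) + (-2 * a 2 ^ 2)) * hc3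
  have e3 : a 3 = 0 := (pow_eq_zero_iff (n := 2) (by norm_num)).mp hz3
  have hz2 : a 2 ^ 2 = 0 := by linear_combination (2) * h0 + ((-2 * a 3)) * e4 + ((-4 * a 3) + (-4 * a 2) + (-4 * a 1) + (-8 * a 0)) * e1 + ((-4 * a 3) + (-4 * a 2) + (-6 * a 0)) * e0 + ((-2 * a 3)) * e3 + ((-1 * a 2 ^ 2)) * hc3
  have e2 : a 2 = 0 := (pow_eq_zero_iff (n := 2) (by norm_num)).mp hz2
  funext i
  rw [Pi.zero_apply]
  fin_cases i
  exacts [e0, e1, e2, e3, e4]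
end

section
/- Let f̄ ∈ 𝔽₃[x₁,…,x₅] be the reduction of f modulo 3. There exists exactly one 2-dimensional 𝔽₃-linear subspace W ⊆ 𝔽₃⁵ such that f̄ vanishes identically on W; equivalently, the cubic threefold X over 𝔽₃ contains exactly one line defined over 𝔽₃. -/
/-!
The zero locus of `f̄` in `𝔽₃⁵` is small (45 vectors), and it contains the plane
`lineW = span {(0,1,0,0,1), (1,0,0,1,1)}`. A plane spanned by independent `x, y` has the four
projective points `x, y, x + y, x + 2y`, and since `f̄` is a cubic form these decide whether `f̄`
vanishes on the whole plane. An exhaustive search shows that whenever `f̄` vanishes at these four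
points, `x` lies in `lineW`. So every plane on which `f̄` vanishes is contained in `lineW`, hence
equal to it.
-/

open MvPolynomial

open Module Submodule

theorem Submodule.exists_mem_notMem_span_singleton {K V : Type*} [DivisionRing K]
    [AddCommGroup V] [Module K V] {W : Submodule K V} (hW : 1 < finrank K W) (x : V) :
    ∃ y ∈ W, y ∉ K ∙ x := by
  by_contra! hWx
  have : finrank K W ≤ 1 :=
    calc finrank K W ≤ finrank K (K ∙ x) := Submodule.finrank_mono hWx
      _ ≤ 1 := by simpa using finrank_span_le_card ({x} : Set V)
  omega

/-- The polynomial function of `cubicFbar`, in a form the kernel can evaluate. -/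
def cubicFun (x : Fin 5 → ZMod 3) : ZMod 3 :=
  x 0 ^ 3 + 2 * x 0 ^ 2 * x 1 + 2 * x 0 * x 1 ^ 2 + x 0 ^ 2 * x 2 + 2 * x 0 * x 1 * x 2
    + 2 * x 0 * x 2 ^ 2 + 2 * x 1 * x 2 ^ 2 + x 2 ^ 3 + x 0 ^ 2 * x 3 + 2 * x 0 * x 1 * x 3
    + x 1 ^ 2 * x 3 + x 1 * x 2 * x 3 + x 0 * x 3 ^ 2 + 2 * x 2 * x 3 ^ 2 + x 3 ^ 3
    + x 1 ^ 2 * x 4 + 2 * x 1 * x 2 * x 4 + 2 * x 2 ^ 2 * x 4 + x 0 * x 3 * x 4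
    + x 1 * x 3 * x 4 + x 3 ^ 2 * x 4 + x 1 * x 4 ^ 2 + 2 * x 3 * x 4 ^ 2 + x 4 ^ 3

theorem eval_cubicFbar (x : Fin 5 → ZMod 3) : eval x cubicFbar = cubicFun x := by
  simp [cubicFbar, cubicF, cubicFun]

def lineU : Fin 5 → ZMod 3 := ![0, 1, 0, 0, 1]

def lineV : Fin 5 → ZMod 3 := ![1, 0, 0, 1, 1]

def lineW : Submodule (ZMod 3) (Fin 5 → ZMod 3) := span (ZMod 3) {lineU, lineV}

theorem finrank_lineW : finrank (ZMod 3) lineW = 2 := by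
  have hli : LinearIndependent (ZMod 3) ![lineU, lineV] :=
    LinearIndependent.pair_iff.mpr (by decide)
  rw [lineW, ← Matrix.range_cons_cons_empty _ _ ![], finrank_span_eq_card hli,
    Fintype.card_fin]

theorem eval_cubicFbar_of_mem_lineW {x : Fin 5 → ZMod 3} (hx : x ∈ lineW) :
    eval x cubicFbar = 0 := by
  obtain ⟨a, b, rfl⟩ := mem_span_pair.mp hx
  rw [eval_cubicFbar]
  exact (by decide : ∀ a b : ZMod 3, cubicFun (a • lineU + b • lineV) = 0) a b

-- The hypotheses are ordered so that the exhaustive search discards most `x` and `y` early.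
set_option synthInstance.maxSize 1000 in
theorem cubicFun_ne_zero_of_notMem_lineW :
    ∀ x : Fin 5 → ZMod 3, cubicFun x = 0 → (¬ ∃ a b : ZMod 3, a • lineU + b • lineV = x) →
      ∀ y : Fin 5 → ZMod 3, cubicFun y = 0 → (¬ ∃ c : ZMod 3, c • x = y) →
      cubicFun (x + y) = 0 → cubicFun (x + (2 : ZMod 3) • y) ≠ 0 := by
  decide +kernel

theorem le_lineW_of_eval_cubicFbar_eq_zero {W : Submodule (ZMod 3) (Fin 5 → ZMod 3)}
    (hW : 1 < finrank (ZMod 3) W) (hf : ∀ x ∈ W, eval x cubicFbar = 0) : W ≤ lineW := by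
  intro x hxW
  by_contra hx
  obtain ⟨y, hyW, hyx⟩ := exists_mem_notMem_span_singleton hW x
  simp only [eval_cubicFbar] at hf
  exact cubicFun_ne_zero_of_notMem_lineW x (hf x hxW) (mt mem_span_pair.mpr hx) y (hf y hyW)
    (mt mem_span_singleton.mpr hyx) (hf _ (W.add_mem hxW hyW))
    (hf _ (W.add_mem hxW (W.smul_mem 2 hyW)))

/-- There is exactly one 2-dimensional `𝔽₃`-linear subspace `W ⊆ 𝔽₃⁵` on which `f̄`
vanishes identically; equivalently, the cubic threefold `X` over `𝔽₃` contains exactly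
one line defined over `𝔽₃`. -/
theorem cubic_unique_line_F3 :
    ∃! W : Submodule (ZMod 3) (Fin 5 → ZMod 3),
      Module.finrank (ZMod 3) W = 2 ∧ ∀ x ∈ W, MvPolynomial.eval x cubicFbar = 0 := by
  refine ⟨lineW, ⟨finrank_lineW, fun x => eval_cubicFbar_of_mem_lineW⟩, ?_⟩
  rintro W ⟨hW, hf⟩
  exact eq_of_le_of_finrank_eq (le_lineW_of_eval_cubicFbar_eq_zero (by omega) hf)
    (hW.trans finrank_lineW.symm)
end

section
/- Every complex root z of the polynomial P(T) satisfies |z| = √3. -/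
open Polynomial

/-- The Weil polynomial `P(T) = Q₁(J(X)/𝔽₃, T)` of the intermediate Jacobian of the
cubic threefold `X` of the paper over `𝔽₃`. -/
noncomputable def weilP : Polynomial ℤ :=
  X ^ 10 - 6 * X ^ 9 + 15 * X ^ 8 - 10 * X ^ 7 - 41 * X ^ 6 + 125 * X ^ 5
    - 123 * X ^ 4 - 90 * X ^ 3 + 405 * X ^ 2 - 486 * X + 243

/-!
`P(T) = T⁵ h(T + 3/T)` with `h(s) = s⁵ - 6s⁴ + 62s² - 131s + 77`. The polynomial `h` changes
sign between consecutive points of `-69/20 < 0 < 2 < 5/2 < 3 < 69/20`, so its five roots are real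
and satisfy `s² < 12`. A root `z` of `P` therefore satisfies `z + 3/z = s` with `s` real and
`s² < 4 · 3`; the quadratic `z² - s z + 3` then has non-real conjugate roots, so `z z̄ = 3`.
-/

theorem Polynomial.mem_range_of_isRoot_of_natDegree_le_card {R ι : Type*} [CommRing R]
    [IsDomain R] [Fintype ι] {p : R[X]} (hp : p ≠ 0) {x : ι → R} (hx : Function.Injective x)
    (hroots : ∀ i, p.IsRoot (x i)) (hdeg : p.natDegree ≤ Fintype.card ι) {z : R}
    (hz : p.IsRoot z) : z ∈ Set.range x := by
  classical
  by_contra hzx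
  have hsub : (insert z (Finset.univ.image x)).val ⊆ p.roots := by
    intro y hy
    rw [mem_roots hp]
    obtain rfl | ⟨i, -, rfl⟩ := by simpa using hy
    exacts [hz, hroots i]
  have hcard := card_le_degree_of_subset_roots hsub
  rw [Finset.card_insert_of_notMem (by simpa using hzx), Finset.card_image_of_injective _ hx,
    Finset.card_univ] at hcard
  omega

theorem exists_strictMono_zeros_of_sign_changes {n : ℕ} {f : ℝ → ℝ} (hf : Continuous f)
    {a : Fin (n + 1) → ℝ} (ha : StrictMono a)
    (hsign : ∀ i : Fin n, f (a i.castSucc) * f (a i.succ) < 0) :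
    ∃ x : Fin n → ℝ, StrictMono x ∧
      ∀ i, f (x i) = 0 ∧ x i ∈ Set.Ioo (a i.castSucc) (a i.succ) := by
  have hzero : ∀ i : Fin n, ∃ y ∈ Set.Ioo (a i.castSucc) (a i.succ), f y = 0 := by
    intro i
    have hle := (ha i.castSucc_lt_succ).le
    rcases mul_neg_iff.mp (hsign i) with ⟨hl, hr⟩ | ⟨hl, hr⟩
    · exact intermediate_value_Ioo' hle hf.continuousOn ⟨hr, hl⟩
    · exact intermediate_value_Ioo hle hf.continuousOn ⟨hl, hr⟩
  choose x hx hfx using hzero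
  refine ⟨x, fun i j hij => ?_, fun i => ⟨hfx i, hx i⟩⟩
  calc x i < a i.succ := (hx i).2
    _ ≤ a j.castSucc := ha.monotone (Fin.succ_le_castSucc_iff.mpr hij)
    _ < x j := (hx j).1

theorem Polynomial.exists_ofReal_eq_of_sign_changes {n : ℕ} {p : ℝ[X]} (hp : p ≠ 0)
    (hdeg : p.natDegree ≤ n) {a : Fin (n + 1) → ℝ} (ha : StrictMono a)
    (hsign : ∀ i : Fin n, p.eval (a i.castSucc) * p.eval (a i.succ) < 0)
    {z : ℂ} (hz : aeval z p = 0) : ∃ x ∈ Set.Ioo (a 0) (a (Fin.last n)), (x : ℂ) = z := by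
  obtain ⟨x, hxmono, hx⟩ := exists_strictMono_zeros_of_sign_changes p.continuous ha hsign
  have hmap : (p.map (algebraMap ℝ ℂ)).IsRoot z := by
    rwa [IsRoot, eval_map_algebraMap]
  obtain ⟨i, rfl⟩ := mem_range_of_isRoot_of_natDegree_le_card
    ((Polynomial.map_ne_zero_iff (algebraMap ℝ ℂ).injective).mpr hp)
    (Complex.ofReal_injective.comp hxmono.injective)
    (fun i => by
      rw [IsRoot, eval_map_algebraMap]
      exact (aeval_algebraMap_apply_eq_algebraMap_eval (x i) p).trans (by rw [(hx i).1, map_zero]))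
    (by simpa [natDegree_map] using hdeg) hmap
  refine ⟨x i, ⟨?_, ?_⟩, rfl⟩
  · exact (ha.monotone (Fin.zero_le _)).trans_lt (hx i).2.1
  · exact (hx i).2.2.trans_le (ha.monotone (Fin.le_last _))

theorem Complex.norm_eq_sqrt_of_add_div_eq_ofReal {q r : ℝ} {z : ℂ} (hz : z ≠ 0)
    (hr : r ^ 2 < 4 * q) (h : z + q / z = r) : ‖z‖ = √q := by
  have hquad : z ^ 2 - r * z + q = 0 := by
    field_simp at h
    linear_combination h
  have hre : z.re ^ 2 - z.im ^ 2 - r * z.re + q = 0 := by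
    simpa [pow_two] using congrArg Complex.re hquad
  have him : (2 * z.re - r) * z.im = 0 := by
    linear_combination (by simpa [pow_two] using congrArg Complex.im hquad : _ = _)
  have him_ne : z.im ≠ 0 := by
    intro h0
    rw [h0] at hre
    nlinarith [sq_nonneg (2 * z.re - r)]
  have htrace : 2 * z.re = r := by
    linarith [(mul_eq_zero.mp him).resolve_right him_ne]
  rw [Complex.norm_def, Complex.normSq_apply]
  congr 1
  linear_combination -hre + z.re * htrace

noncomputable def weilTraceP : ℝ[X] := X ^ 5 - 6 * X ^ 4 + 62 * X ^ 2 - 131 * X + 77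

theorem aeval_weilP_eq {z : ℂ} (hz : z ≠ 0) :
    aeval z weilP = z ^ 5 * aeval (z + 3 / z) weilTraceP := by
  simp only [weilP, weilTraceP, map_add, map_sub, map_mul, map_pow, map_ofNat, aeval_X]
  field_simp
  ring

theorem natDegree_weilTraceP : weilTraceP.natDegree = 5 := by
  unfold weilTraceP
  compute_degree!

theorem weilTraceP_ne_zero : weilTraceP ≠ 0 :=
  ne_zero_of_natDegree_gt (natDegree_weilTraceP ▸ by norm_num : 0 < weilTraceP.natDegree)

theorem exists_ofReal_eq_of_aeval_weilTraceP {s : ℂ} (hs : aeval s weilTraceP = 0) :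
    ∃ x : ℝ, x ^ 2 < 4 * 3 ∧ (x : ℂ) = s := by
  let a : Fin 6 → ℝ := ![-69/20, 0, 2, 5/2, 3, 69/20]
  have ha : StrictMono a := by
    refine Fin.strictMono_iff_lt_succ.mpr fun i => ?_
    fin_cases i <;> norm_num [a, Fin.succ, Fin.castSucc, Fin.castAdd, Fin.castLE]
  have hsign : ∀ i : Fin 5, weilTraceP.eval (a i.castSucc) * weilTraceP.eval (a i.succ) < 0 := by
    intro i
    fin_cases i <;> norm_num [a, weilTraceP, Fin.succ, Fin.castSucc, Fin.castAdd, Fin.castLE]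
  obtain ⟨x, ⟨hlo, hhi⟩, rfl⟩ :=
    exists_ofReal_eq_of_sign_changes weilTraceP_ne_zero natDegree_weilTraceP.le ha hsign hs
  refine ⟨x, ?_, rfl⟩
  norm_num [a, Fin.last] at hlo hhi
  nlinarith

/-- Every complex root `z` of `P(T)` satisfies `|z| = √3`. -/
theorem weilP_roots_abs :
    ∀ z : ℂ, Polynomial.aeval z weilP = 0 → ‖z‖ = Real.sqrt 3 := by
  intro z hz
  have hz0 : z ≠ 0 := by
    rintro rfl
    norm_num [weilP, map_ofNat] at hz
  have htrace : aeval (z + 3 / z) weilTraceP = 0 := by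
    rw [aeval_weilP_eq hz0] at hz
    exact (mul_eq_zero.mp hz).resolve_left (pow_ne_zero 5 hz0)
  obtain ⟨s, hs, hzs⟩ := exists_ofReal_eq_of_aeval_weilTraceP htrace
  exact Complex.norm_eq_sqrt_of_add_div_eq_ofReal hz0 hs (by exact_mod_cast hzs.symm)
end

section
/- Let p be a prime with p ≡ 2 (mod 3) and let q = p². Then the number of solutions (x₁,…,x₅) ∈ 𝔽_q⁵ of x₁³ + x₂³ + x₃³ + x₄³ + x₅³ = 0 equals 1 + (q − 1)·(1 + q + q² + q³ + 10·p³); equivalently, the Fermat cubic threefold has exactly 1 + p² + p⁴ + p⁶ + 10p³ points in ℙ⁴(𝔽_{p²}). -/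
open Finset

private lemma geom3 {R : Type*} [CommRing R] [IsDomain R] {u : R} (h3 : u ^ 3 = 1) (h1 : u ≠ 1) :
    1 + u + u ^ 2 = 0 := by
  have h : (u - 1) * (1 + u + u ^ 2) = 0 := by linear_combination h3
  rcases mul_eq_zero.mp h with h' | h'
  · exact absurd (sub_eq_zero.mp h') h1
  · exact h'

private lemma sum_add_units {F M : Type*} [Field F] [Fintype F] [DecidableEq F]
    [AddCommMonoid M] (f : F → M) :
    ∑ x : F, f x = f 0 + ∑ u : Fˣ, f ↑u := by
  rw [← Finset.sum_filter_add_sum_filter_not Finset.univ (fun x => x = 0) f]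
  congr 1
  · rw [Finset.filter_eq']
    simp
  · have h1 : ∑ x ∈ Finset.univ.filter (fun x : F => ¬ x = 0), f x
        = ∑ a : {x : F // ¬ x = 0}, f ↑a :=
      Finset.sum_subtype _ (by simp) f
    rw [h1]
    exact (Fintype.sum_equiv unitsEquivNeZero (fun u => f ↑u)
      (fun a : {x : F // ¬ x = 0} => f ↑a) (fun u => rfl)).symm

private lemma sum_units_mulChar {F R : Type*} [Field F] [Fintype F] [DecidableEq F]
    [CommRing R] [IsDomain R] {χ : MulChar F R} (h : χ ≠ 1) :
    ∑ u : Fˣ, χ ↑u = 0 := by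
  have h0 := MulChar.sum_eq_zero_of_ne_one h
  rw [sum_add_units (fun x => χ x)] at h0
  rwa [MulChar.map_nonunit χ (by simp), zero_add] at h0

private lemma card_cube_roots_one {F : Type*} [Field F] [Fintype F] [DecidableEq F]
    (hq3 : 3 ∣ Fintype.card F - 1) :
    #(Finset.univ.filter (fun y : Fˣ => y ^ 3 = 1)) = 3 := by
  haveI : Fact (Nat.Prime 3) := ⟨by norm_num⟩
  have h3card : 3 ∣ Fintype.card Fˣ := by rwa [Fintype.card_units]
  obtain ⟨ω, hω⟩ := exists_prime_orderOf_dvd_card 3 h3card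
  have hω3 : ω ^ 3 = 1 := by rw [← hω]; exact pow_orderOf_eq_one ω
  have hω1 : ω ≠ 1 := by
    intro h; rw [h, orderOf_one] at hω; omega
  have hω2 : ω ^ 2 ≠ 1 := pow_ne_one_of_lt_orderOf (by norm_num) (by omega)
  have hωω : ω ≠ ω ^ 2 := by
    intro h
    apply hω1
    have h2 : ω * ω = ω * 1 := by rw [mul_one, ← sq]; exact h.symm
    exact (mul_left_cancel h2)
  refine le_antisymm (IsCyclic.card_pow_eq_one_le (by norm_num)) ?_
  have hsub : ({1, ω, ω ^ 2} : Finset Fˣ) ⊆ Finset.univ.filter (fun y : Fˣ => y ^ 3 = 1) := by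
    intro x hx
    simp only [mem_insert, mem_singleton] at hx
    simp only [mem_filter, mem_univ, true_and]
    rcases hx with h | h | h <;> rw [h]
    · exact one_pow 3
    · exact hω3
    · rw [← pow_mul, show 2 * 3 = 3 * 2 from rfl, pow_mul, hω3, one_pow]
  have hcard : ({1, ω, ω ^ 2} : Finset Fˣ).card = 3 := by
    rw [Finset.card_insert_of_notMem (by simp [hω1.symm, Ne.symm hω2]),
      Finset.card_insert_of_notMem (by simp [hωω]), Finset.card_singleton]
  calc 3 = ({1, ω, ω ^ 2} : Finset Fˣ).card := hcard.symm
    _ ≤ _ := Finset.card_le_card hsub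

private lemma card_cube_fiber {F : Type*} [Field F] [Fintype F] [DecidableEq F]
    (hq3 : 3 ∣ Fintype.card F - 1) (y₀ : Fˣ) :
    #(Finset.univ.filter (fun y : Fˣ => y ^ 3 = y₀ ^ 3)) = 3 := by
  conv_rhs => rw [← card_cube_roots_one hq3]
  apply Finset.card_bij' (fun y _ => y₀⁻¹ * y) (fun z _ => y₀ * z)
  · intro a ha
    simp only [mem_filter, mem_univ, true_and] at ha ⊢
    rw [mul_pow, ha, inv_pow, inv_mul_cancel]
  · intro z hz
    simp only [mem_filter, mem_univ, true_and] at hz ⊢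
    rw [mul_pow, hz, mul_one]
  · intro a _; rw [mul_inv_cancel_left]
  · intro z _; rw [inv_mul_cancel_left]

section

variable {F R : Type*} [Field F] [Fintype F] [DecidableEq F]
  [CommRing R] [IsDomain R] [CharZero R]

private lemma cube_sum {χ : MulChar F R} (hord : orderOf χ = 3)
    (hq3 : 3 ∣ Fintype.card F - 1) (h : Fˣ → R) :
    ∑ y : Fˣ, h (y ^ 3) = ∑ c : Fˣ, (1 + χ ↑c + χ ↑c ^ 2) * h c := by
  classical
  have hχ3 : χ ^ 3 = 1 := by rw [← hord]; exact pow_orderOf_eq_one χ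
  have hχ1 : χ ≠ 1 := by intro hh; rw [hh, orderOf_one] at hord; omega
  have hχ2 : χ ^ 2 ≠ 1 := by
    intro hh
    have := orderOf_dvd_of_pow_eq_one hh
    rw [hord] at this; omega
  have huc : ∀ y : Fˣ, (χ ↑y) ^ 3 = 1 := by
    intro y
    rw [← MulChar.pow_apply' χ (by norm_num) ↑y, hχ3, MulChar.one_apply_coe]
  have hν : ∀ c : Fˣ, 1 + χ ↑c + χ ↑c ^ 2 = if χ ↑c = 1 then (3 : R) else 0 := by
    intro c
    split_ifs with hc
    · rw [hc]; norm_num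
    · exact geom3 (huc c) hc
  set A := Finset.univ.image (fun y : Fˣ => y ^ 3) with hA
  have himg3 : ∀ c ∈ A, 1 + χ ↑c + χ ↑c ^ 2 = 3 := by
    intro c hc
    obtain ⟨y₀, _, rfl⟩ := Finset.mem_image.mp hc
    have hcc : χ ↑(y₀ ^ 3) = 1 := by
      rw [Units.val_pow_eq_pow_val, map_pow]
      exact huc y₀
    rw [hcc]; norm_num
  have hfib : ∀ c ∈ A, #(Finset.univ.filter (fun y : Fˣ => y ^ 3 = c)) = 3 := by
    intro c hc
    obtain ⟨y₀, _, rfl⟩ := Finset.mem_image.mp hc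
    exact card_cube_fiber hq3 y₀
  have hcard_img : Fintype.card Fˣ = 3 * #A := by
    rw [← Finset.card_univ, Finset.card_eq_sum_card_image (fun y : Fˣ => y ^ 3) Finset.univ]
    rw [Finset.sum_congr rfl hfib, Finset.sum_const, smul_eq_mul, mul_comm]
  have hsq : ∑ c : Fˣ, (χ ↑c) ^ 2 = 0 := by
    have e : ∀ c : Fˣ, (χ ↑c) ^ 2 = (χ ^ 2) ↑c :=
      fun c => (MulChar.pow_apply' χ two_ne_zero ↑c).symm
    rw [Finset.sum_congr rfl (fun c _ => e c)]
    exact sum_units_mulChar hχ2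
  have hsum_univ : ∑ c : Fˣ, (1 + χ ↑c + χ ↑c ^ 2) = (Fintype.card Fˣ : R) := by
    rw [Finset.sum_add_distrib, Finset.sum_add_distrib, sum_units_mulChar hχ1, hsq,
      Finset.sum_const, Finset.card_univ, nsmul_eq_mul, mul_one, add_zero, add_zero]
  have hsum_img : ∑ c ∈ A, (1 + χ ↑c + χ ↑c ^ 2) = (Fintype.card Fˣ : R) := by
    rw [Finset.sum_congr rfl himg3, Finset.sum_const, hcard_img, nsmul_eq_mul]
    push_cast
    ring
  have hcompl : ∑ c ∈ Finset.univ \ A, (1 + χ ↑c + χ ↑c ^ 2) = 0 := by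
    have hs := Finset.sum_sdiff (f := fun c : Fˣ => 1 + χ ↑c + χ ↑c ^ 2) (Finset.subset_univ A)
    rw [hsum_img, hsum_univ] at hs
    linear_combination hs
  have hfilter : #((Finset.univ \ A).filter (fun c : Fˣ => χ ↑c = 1)) = 0 := by
    have h0 : ∑ c ∈ Finset.univ \ A, (if χ ↑c = 1 then (3 : R) else 0) = 0 := by
      rw [← Finset.sum_congr rfl (fun c _ => hν c)]
      exact hcompl
    rw [Finset.sum_ite, Finset.sum_const, Finset.sum_const_zero, add_zero, nsmul_eq_mul] at h0
    rcases mul_eq_zero.mp h0 with h' | h'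
    · exact_mod_cast h'
    · norm_num at h'
  have hvanish : ∀ c ∈ Finset.univ, c ∉ A → (1 + χ ↑c + χ ↑c ^ 2) * h c = 0 := by
    intro c _ hc
    have hne : χ ↑c ≠ 1 := by
      intro h1
      have hmem : c ∈ (Finset.univ \ A).filter (fun c : Fˣ => χ ↑c = 1) :=
        Finset.mem_filter.mpr ⟨Finset.mem_sdiff.mpr ⟨Finset.mem_univ c, hc⟩, h1⟩
      rw [Finset.card_eq_zero] at hfilter
      rw [hfilter] at hmem
      exact absurd hmem (Finset.notMem_empty c)
    rw [hν c, if_neg hne, zero_mul]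
  calc ∑ y : Fˣ, h (y ^ 3)
      = ∑ c ∈ A, #(Finset.univ.filter (fun y : Fˣ => y ^ 3 = c)) • h c :=
        Finset.sum_comp h (fun y : Fˣ => y ^ 3)
    _ = ∑ c ∈ A, (1 + χ ↑c + χ ↑c ^ 2) * h c := by
        refine Finset.sum_congr rfl fun c hc => ?_
        rw [hfib c hc, himg3 c hc, nsmul_eq_mul]
        norm_num
    _ = ∑ c : Fˣ, (1 + χ ↑c + χ ↑c ^ 2) * h c :=
        Finset.sum_subset (Finset.subset_univ A) hvanish

private lemma Gt_eval {χ : MulChar F R} (hord : orderOf χ = 3)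
    (hq3 : 3 ∣ Fintype.card F - 1) {ψ : AddChar F R} (hψ : ψ.IsPrimitive) (t : Fˣ) :
    ∑ y : F, ψ (↑t * y ^ 3)
      = (χ ↑t) ^ 2 * gaussSum χ ψ + χ ↑t * gaussSum (χ ^ 2) ψ := by
  classical
  have hχ3 : χ ^ 3 = 1 := by rw [← hord]; exact pow_orderOf_eq_one χ
  have huc : ∀ y : Fˣ, (χ ↑y) ^ 3 = 1 := by
    intro y
    rw [← MulChar.pow_apply' χ (by norm_num) ↑y, hχ3, MulChar.one_apply_coe]
  have hg1 : ∑ c : Fˣ, χ ↑c * ψ (↑t * ↑c) = (χ ↑t) ^ 2 * gaussSum χ ψ := by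
    have e1 : ∑ c : Fˣ, χ ↑c * ψ (↑t * ↑c) = gaussSum χ (ψ.mulShift ↑t) := by
      rw [gaussSum, sum_add_units (fun x => χ x * (ψ.mulShift ↑t) x)]
      simp only [MulChar.map_nonunit χ (not_isUnit_zero), zero_mul, zero_add,
        AddChar.mulShift_apply]
    have e2 := gaussSum_mulShift χ ψ t
    rw [e1, ← e2]
    have h1 : (χ ↑t) ^ 2 * χ ↑t = 1 := by rw [← pow_succ]; exact huc t
    rw [← mul_assoc, h1, one_mul]
  have hg2 : ∑ c : Fˣ, (χ ↑c) ^ 2 * ψ (↑t * ↑c) = χ ↑t * gaussSum (χ ^ 2) ψ := by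
    have e1 : ∑ c : Fˣ, (χ ↑c) ^ 2 * ψ (↑t * ↑c) = gaussSum (χ ^ 2) (ψ.mulShift ↑t) := by
      rw [gaussSum, sum_add_units (fun x => (χ ^ 2) x * (ψ.mulShift ↑t) x)]
      simp only [MulChar.map_nonunit (χ ^ 2) (not_isUnit_zero), zero_mul, zero_add,
        AddChar.mulShift_apply]
      refine Finset.sum_congr rfl fun c _ => ?_
      rw [MulChar.pow_apply' χ two_ne_zero]
    have e2 := gaussSum_mulShift (χ ^ 2) ψ t
    rw [e1, ← e2]
    have h2t : (χ ^ 2) ↑t = (χ ↑t) ^ 2 := MulChar.pow_apply' χ two_ne_zero ↑t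
    have h1 : χ ↑t * (χ ↑t) ^ 2 = 1 := by rw [← pow_succ']; exact huc t
    rw [h2t, ← mul_assoc, h1, one_mul]
  have hg0 : ∑ c : Fˣ, ψ (↑t * ↑c) = -1 := by
    have h0 : ∑ x : F, ψ (x * ↑t) = 0 := by
      rw [AddChar.sum_mulShift _ hψ, if_neg (Units.ne_zero t)]
      exact Nat.cast_zero
    rw [sum_add_units (fun x => ψ (x * ↑t))] at h0
    rw [zero_mul, AddChar.map_zero_eq_one] at h0
    have h1 : ∑ u : Fˣ, ψ (↑u * ↑t) = -1 := by linear_combination h0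
    rw [← h1]
    exact Finset.sum_congr rfl fun c _ => by rw [mul_comm]
  rw [sum_add_units (fun y => ψ (↑t * y ^ 3))]
  have hz : ψ (↑t * (0 : F) ^ 3) = 1 := by
    rw [show ((0 : F) ^ 3) = 0 from by norm_num, mul_zero, AddChar.map_zero_eq_one]
  rw [hz]
  have hcube : ∑ u : Fˣ, ψ (↑t * (↑u : F) ^ 3) = ∑ y : Fˣ, ψ (↑t * ↑(y ^ 3)) :=
    Finset.sum_congr rfl fun y _ => by rw [Units.val_pow_eq_pow_val]
  rw [hcube, cube_sum hord hq3 (fun c : Fˣ => ψ (↑t * ↑c))]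
  simp only [add_mul, one_mul]
  rw [Finset.sum_add_distrib, Finset.sum_add_distrib, hg0, hg1, hg2]
  ring

end

private lemma jacobiSum_frob {F R : Type*} [Field F] [Fintype F] [CommRing R] [IsDomain R]
    {p : ℕ} [Fact p.Prime] [CharP F p] (hmod : p % 3 = 2)
    {χ : MulChar F R} (hord : orderOf χ = 3) :
    jacobiSum (χ ^ 2) (χ ^ 2) = jacobiSum χ χ := by
  obtain ⟨k, hk⟩ : ∃ k, p = 3 * k + 2 := ⟨p / 3, by omega⟩
  have hχ3 : χ ^ 3 = 1 := by rw [← hord]; exact pow_orderOf_eq_one χ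
  have hbij : Function.Bijective (fun x : F => x ^ p) := by
    rw [← Finite.injective_iff_bijective]
    intro x y h
    have h' : x ^ p = y ^ p := h
    have h0 : (x - y) ^ p = 0 := by rw [sub_pow_char, h', sub_self]
    exact sub_eq_zero.mp ((pow_eq_zero_iff (Fact.out (p := p.Prime)).ne_zero).mp h0)
  have hpt : ∀ x : F, (χ x) ^ p = (χ ^ 2) x := by
    intro x
    rcases eq_or_ne x 0 with rfl | hx
    · rw [MulChar.map_nonunit χ not_isUnit_zero,
        MulChar.map_nonunit (χ ^ 2) not_isUnit_zero,
        zero_pow (Fact.out (p := p.Prime)).ne_zero]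
    · have hu : (χ x) ^ 3 = 1 := by
        rw [← MulChar.pow_apply' χ (by norm_num) x, hχ3, MulChar.one_apply hx.isUnit]
      rw [MulChar.pow_apply' χ two_ne_zero, hk, pow_add, pow_mul, hu, one_pow, one_mul]
  calc jacobiSum (χ ^ 2) (χ ^ 2) = ∑ x : F, (χ ^ 2) x * (χ ^ 2) (1 - x) := rfl
    _ = ∑ x : F, χ (x ^ p) * χ ((1 - x) ^ p) := by
        refine Finset.sum_congr rfl fun x _ => ?_
        rw [map_pow, map_pow, hpt, hpt]
    _ = ∑ x : F, χ (x ^ p) * χ (1 - x ^ p) := by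
        refine Finset.sum_congr rfl fun x _ => ?_
        rw [sub_pow_char, one_pow]
    _ = ∑ x : F, χ x * χ (1 - x) :=
        Fintype.sum_bijective _ hbij _ _ (fun x => rfl)
    _ = jacobiSum χ χ := rfl

private lemma adjoin_int_mu {R : Type*} [CommRing R] {μ : R} (hrel : μ ^ 2 + μ + 1 = 0)
    {z : R} (hz : z ∈ Algebra.adjoin ℤ {μ}) : ∃ a b : ℤ, z = a + b * μ := by
  induction hz using Algebra.adjoin_induction with
  | mem x hx =>
      rw [Set.mem_singleton_iff] at hx
      exact ⟨0, 1, by rw [hx]; push_cast; ring⟩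
  | algebraMap r => exact ⟨r, 0, by rw [eq_intCast]; push_cast; ring⟩
  | add x y hx hy ihx ihy =>
      obtain ⟨a, b, rfl⟩ := ihx
      obtain ⟨c, d, rfl⟩ := ihy
      exact ⟨a + c, b + d, by push_cast; ring⟩
  | mul x y hx hy ihx ihy =>
      obtain ⟨a, b, rfl⟩ := ihx
      obtain ⟨c, d, rfl⟩ := ihy
      refine ⟨a * c - b * d, a * d + b * c - b * d, ?_⟩
      push_cast
      linear_combination (b : R) * (d : R) * hrel

set_option linter.unusedSectionVars false in
private lemma gauss_eval {F R : Type*} [Field F] [Fintype F] [DecidableEq F]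
    [CommRing R] [IsDomain R] [CharZero R]
    {p : ℕ} [Fact p.Prime] [CharP F p] (hmod : p % 3 = 2)
    (hcard : Fintype.card F = p ^ 2) {χ : MulChar F R} (hord : orderOf χ = 3)
    {μ : R} (hμ : IsPrimitiveRoot μ 3) {ψ : AddChar F R} (hψ : ψ.IsPrimitive) :
    gaussSum χ ψ * gaussSum (χ ^ 2) ψ = (Fintype.card F : R) ∧
    gaussSum χ ψ ^ 3 = (Fintype.card F : R) * p ∧
    gaussSum (χ ^ 2) ψ ^ 3 = (Fintype.card F : R) * p := by
  obtain ⟨k, hk⟩ : ∃ k, p = 3 * k + 2 := ⟨p / 3, by omega⟩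
  have hq3 : 3 ∣ Fintype.card F - 1 := by
    have : Fintype.card F = 3 * (3 * k ^ 2 + 4 * k + 1) + 1 := by rw [hcard, hk]; ring
    omega
  have hχ3 : χ ^ 3 = 1 := by rw [← hord]; exact pow_orderOf_eq_one χ
  have hχ1 : χ ≠ 1 := by intro hh; rw [hh, orderOf_one] at hord; omega
  have hχ2 : χ ^ 2 ≠ 1 := by
    intro hh
    have := orderOf_dvd_of_pow_eq_one hh
    rw [hord] at this; omega
  haveI : Fact (Nat.Prime 3) := ⟨by norm_num⟩
  have hord2 : orderOf (χ ^ 2) = 3 := by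
    refine orderOf_eq_prime ?_ hχ2
    rw [← pow_mul, show 2 * 3 = 3 * 2 from rfl, pow_mul, hχ3, one_pow]
  have hm1 : χ (-1) = 1 := by
    have hu2 : χ (-1) ^ 2 = 1 := by
      rw [sq, ← map_mul, neg_mul_neg, one_mul, map_one]
    have hu3 : χ (-1) ^ 3 = 1 := by
      rw [← MulChar.pow_apply' χ (by norm_num), hχ3, MulChar.one_apply (isUnit_one.neg)]
    calc χ (-1) = χ (-1) ^ 3 := by rw [pow_succ, hu2, one_mul]
      _ = 1 := hu3
  have hm1' : (χ ^ 2) (-1) = 1 := by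
    rw [MulChar.pow_apply' χ two_ne_zero, hm1, one_pow]
  have hinv : χ⁻¹ = χ ^ 2 := by
    rw [eq_comm, eq_inv_iff_mul_eq_one, ← pow_succ]
    exact hχ3
  set g₁ := gaussSum χ ψ with hg₁
  set g₂ := gaussSum (χ ^ 2) ψ with hg₂
  set J := jacobiSum χ χ with hJ
  have hprod : g₁ * g₂ = (Fintype.card F : R) := by
    have h1 := gaussSum_mul_gaussSum_eq_card hχ1 hψ
    have h2 := mul_gaussSum_inv_eq_gaussSum χ⁻¹ ψ
    rw [hinv, hm1', one_mul] at h2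
    rw [← h1, hinv, h2]
  have hIco : Finset.Ico 1 2 = {1} := rfl
  have hcube1 : g₁ ^ 3 = (Fintype.card F : R) * J := by
    have h := gaussSum_pow_eq_prod_jacobiSum (χ := χ) (ψ := ψ) (by rw [hord]; norm_num) hψ
    rw [hord] at h
    rw [hg₁, h, hm1, one_mul, show (3 - 1 : ℕ) = 2 from rfl, hIco, Finset.prod_singleton,
      pow_one]
  have hcube2 : g₂ ^ 3 = (Fintype.card F : R) * J := by
    have h := gaussSum_pow_eq_prod_jacobiSum (χ := χ ^ 2) (ψ := ψ) (by rw [hord2]; norm_num) hψ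
    rw [hord2] at h
    rw [hg₂, h, hm1', one_mul, show (3 - 1 : ℕ) = 2 from rfl, hIco, Finset.prod_singleton,
      pow_one, jacobiSum_frob hmod hord]
  have hq0 : (Fintype.card F : R) ≠ 0 := Nat.cast_ne_zero.mpr Fintype.card_pos.ne'
  have hJsq : J ^ 2 = (Fintype.card F : R) := by
    have e1 : g₁ ^ 3 * g₂ ^ 3 = (Fintype.card F : R) ^ 3 := by rw [← mul_pow, hprod]
    rw [hcube1, hcube2] at e1
    refine mul_left_cancel₀ (mul_ne_zero hq0 hq0) ?_
    linear_combination e1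
  have hμ3 : μ ^ 3 = 1 := hμ.pow_eq_one
  have hμ1 : μ ≠ 1 := hμ.ne_one (by norm_num)
  have hrel : μ ^ 2 + μ + 1 = 0 := by linear_combination geom3 hμ3 hμ1
  obtain ⟨z, hz, hcong⟩ := exists_jacobiSum_eq_neg_one_add (by norm_num) hχ3 hχ3 hq3 hμ
  obtain ⟨a, b, rfl⟩ := adjoin_int_mu hrel hz
  have hpm : (J - p) * (J + p) = 0 := by
    have hp2 : ((p : R)) ^ 2 = (Fintype.card F : R) := by rw [hcard]; push_cast; ring
    linear_combination hJsq - hp2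
  have hJp : J = (p : R) := by
    rcases mul_eq_zero.mp hpm with h' | h'
    · linear_combination h'
    · exfalso
      have hJneg : J = -(p : R) := by linear_combination h'
      rw [← hJ, hJneg] at hcong
      have key : ((3 * a - 3 * b : ℤ) : R) * μ = ((p : ℤ) - 1 + 3 * b : ℤ) := by
        push_cast
        linear_combination hcong + ((a : R) + (b : R) * μ - 3 * (b : R)) * hrel
      have key3R : ((3 * a - 3 * b : ℤ) : R) ^ 3 * μ ^ 3 = (((p : ℤ) - 1 + 3 * b : ℤ) : R) ^ 3 := by
        rw [← mul_pow, key]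
      rw [hμ3, mul_one] at key3R
      have key3 : (3 * a - 3 * b) ^ 3 = ((p : ℤ) - 1 + 3 * b) ^ 3 := by exact_mod_cast key3R
      have hcd : 3 * a - 3 * b = (p : ℤ) - 1 + 3 * b := by
        nlinarith [sq_nonneg ((3 * a - 3 * b) - ((p : ℤ) - 1 + 3 * b)),
          sq_nonneg ((3 * a - 3 * b) + ((p : ℤ) - 1 + 3 * b))]
      omega
  exact ⟨hprod, by rw [hcube1, hJp], by rw [hcube2, hJp]⟩

set_option maxHeartbeats 2000000 in
/-- For a prime `p ≡ 2 (mod 3)` and `q = p²`, the Fermat cubic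
`x₁³+x₂³+x₃³+x₄³+x₅³ = 0` has exactly `1 + (q − 1)·(1 + q + q² + q³ + 10·p³)` solutions
in `𝔽_q⁵`; equivalently, the Fermat cubic threefold has `1 + p² + p⁴ + p⁶ + 10p³` points
in `ℙ⁴(𝔽_{p²})`. -/
theorem fermat_cubic_count_Fp2 (p : ℕ) [Fact p.Prime] (hmod : p % 3 = 2) :
    Nat.card {x : Fin 5 → GaloisField p 2 //
        (x 0) ^ 3 + (x 1) ^ 3 + (x 2) ^ 3 + (x 3) ^ 3 + (x 4) ^ 3 = 0}
      = 1 + (p ^ 2 - 1) * (1 + p ^ 2 + p ^ 4 + p ^ 6 + 10 * p ^ 3) := by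
  classical
  have hp : p.Prime := Fact.out
  set F := GaloisField p 2 with hF
  letI : Fintype F := Fintype.ofFinite F
  have hcard : Fintype.card F = p ^ 2 := by
    rw [← Nat.card_eq_fintype_card]
    exact GaloisField.card p 2 (by norm_num)
  obtain ⟨k, hk⟩ : ∃ k, p = 3 * k + 2 := ⟨p / 3, by omega⟩
  have hq3 : 3 ∣ Fintype.card F - 1 := by
    have h1 : Fintype.card F = 3 * (3 * k ^ 2 + 4 * k + 1) + 1 := by rw [hcard, hk]; ring
    omega
  have hchar : ringChar ℂ ≠ ringChar F := by
    rw [ringChar.eq ℂ 0, ringChar.eq F p]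
    exact fun h => hp.ne_zero h.symm
  set Ψ := AddChar.FiniteField.primitiveChar F ℂ hchar with hΨ
  set R := CyclotomicField Ψ.n ℂ with hR
  letI : CharZero R := charZero_of_injective_algebraMap (algebraMap ℂ R).injective
  set ψ : AddChar F R := Ψ.char with hψdef
  have hψ : ψ.IsPrimitive := Ψ.prim
  have hμ : IsPrimitiveRoot ((algebraMap ℂ R) (Complex.exp (2 * Real.pi * Complex.I / 3))) 3 :=
    (Complex.isPrimitiveRoot_exp 3 (by norm_num)).map_of_injective (algebraMap ℂ R).injective
  obtain ⟨χ, hord⟩ := MulChar.exists_mulChar_orderOf F hq3 hμ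
  obtain ⟨hprod, hcube1, hcube2⟩ := gauss_eval hmod hcard hord hμ hψ
  have hχ3 : χ ^ 3 = 1 := by rw [← hord]; exact pow_orderOf_eq_one χ
  have hχ1 : χ ≠ 1 := by intro hh; rw [hh, orderOf_one] at hord; omega
  have hχ2 : χ ^ 2 ≠ 1 := by
    intro hh
    have h2 := orderOf_dvd_of_pow_eq_one hh
    rw [hord] at h2; omega
  -- the counting set
  set P : (Fin 5 → F) → Prop := fun x =>
    (x 0) ^ 3 + (x 1) ^ 3 + (x 2) ^ 3 + (x 3) ^ 3 + (x 4) ^ 3 = 0 with hPdef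
  have hNc : Nat.card {x : Fin 5 → F // P x} = #(Finset.univ.filter P) := by
    rw [Nat.card_eq_fintype_card, Fintype.card_subtype]
  set N := #(Finset.univ.filter P) with hNdef
  set G : F → R := fun t => ∑ y : F, ψ (t * y ^ 3) with hG
  set g₁ := gaussSum χ ψ with hg₁
  set g₂ := gaussSum (χ ^ 2) ψ with hg₂
  have hfs : ∀ x : Fin 5 → F, ∑ i, (x i) ^ 3
      = (x 0) ^ 3 + (x 1) ^ 3 + (x 2) ^ 3 + (x 3) ^ 3 + (x 4) ^ 3 :=
    fun x => Fin.sum_univ_five _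
  -- Step A : card * N = sum of G^5
  have hpoint : ∀ (t : F) (x : Fin 5 → F),
      ∏ i : Fin 5, ψ (t * (x i) ^ 3) = ψ (t * ∑ i, (x i) ^ 3) := by
    intro t x
    rw [Finset.mul_sum, Fin.sum_univ_five (f := fun i => t * (x i) ^ 3),
      Fin.prod_univ_five (f := fun i => ψ (t * (x i) ^ 3)),
      ψ.map_add_eq_mul, ψ.map_add_eq_mul, ψ.map_add_eq_mul, ψ.map_add_eq_mul]
  have stepA : ∑ t : F, (G t) ^ 5 = (N : R) * (Fintype.card F : R) := by
    calc ∑ t : F, (G t) ^ 5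
        = ∑ t : F, ∑ x : Fin 5 → F, ∏ i : Fin 5, ψ (t * (x i) ^ 3) := by
          refine Finset.sum_congr rfl fun t _ => ?_
          rw [show G t ^ 5 = ∏ _i : Fin 5, G t from by
                rw [Finset.prod_const, Finset.card_univ, Fintype.card_fin]]
          rw [hG]
          rw [Finset.prod_univ_sum (fun _ : Fin 5 => (Finset.univ : Finset F))
            (fun _ y => ψ (t * y ^ 3))]
          rw [Fintype.piFinset_univ]
      _ = ∑ x : Fin 5 → F, ∑ t : F, ψ (t * ∑ i, (x i) ^ 3) := by
          rw [Finset.sum_comm]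
          exact Finset.sum_congr rfl fun x _ => Finset.sum_congr rfl fun t _ => hpoint t x
      _ = ∑ x : Fin 5 → F,
            (if (∑ i, (x i) ^ 3) = 0 then ((Fintype.card F : ℕ) : R) else 0) := by
          refine Finset.sum_congr rfl fun x _ => ?_
          rw [AddChar.sum_mulShift _ hψ, apply_ite (Nat.cast : ℕ → R), Nat.cast_zero]
      _ = (N : R) * (Fintype.card F : R) := by
          rw [Finset.sum_ite, Finset.sum_const, Finset.sum_const_zero, add_zero, nsmul_eq_mul]
          have hfilt : Finset.univ.filter (fun x : Fin 5 → F => ∑ i, (x i) ^ 3 = 0)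
              = Finset.univ.filter P := by
            apply Finset.filter_congr
            intro x _
            rw [hfs x, hPdef]
          rw [hfilt, ← hNdef]
  -- Step B : split off t = 0
  have hG0 : G 0 = (Fintype.card F : R) := by
    rw [hG]
    simp only [zero_mul, AddChar.map_zero_eq_one]
    rw [Finset.sum_const, Finset.card_univ, nsmul_eq_mul, mul_one]
  have hsplit : ∑ t : F, (G t) ^ 5 = (Fintype.card F : R) ^ 5 + ∑ u : Fˣ, (G ↑u) ^ 5 := by
    rw [sum_add_units (fun t => (G t) ^ 5), hG0]
  have hGt : ∀ u : Fˣ, G ↑u = (χ ↑u) ^ 2 * g₁ + (χ ↑u) * g₂ :=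
    fun u => Gt_eval hord hq3 hψ u
  -- character power sums
  have hSm : ∀ m : ℕ, χ ^ m ≠ 1 → ∑ u : Fˣ, (χ ↑u) ^ m = 0 := by
    intro m hm
    have hm0 : m ≠ 0 := by rintro rfl; exact hm (pow_zero χ)
    calc ∑ u : Fˣ, (χ ↑u) ^ m = ∑ u : Fˣ, (χ ^ m) ↑u :=
          Finset.sum_congr rfl fun u _ => (MulChar.pow_apply' χ hm0 ↑u).symm
      _ = 0 := sum_units_mulChar hm
  have hSt : ∀ m : ℕ, χ ^ m = 1 → ∑ u : Fˣ, (χ ↑u) ^ m = ((Fintype.card F - 1 : ℕ) : R) := by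
    intro m hm
    have h1 : ∀ u : Fˣ, (χ ↑u) ^ m = 1 := by
      intro u
      rcases eq_or_ne m 0 with rfl | hm0
      · rw [pow_zero]
      · rw [← MulChar.pow_apply' χ hm0, hm, MulChar.one_apply_coe]
    rw [Finset.sum_congr rfl (fun u _ => h1 u), Finset.sum_const, Finset.card_univ,
      Fintype.card_units, nsmul_eq_mul, mul_one]
  have h6 : χ ^ 6 = 1 := by rw [show (6 : ℕ) = 3 * 2 from rfl, pow_mul, hχ3, one_pow]
  have h9 : χ ^ 9 = 1 := by rw [show (9 : ℕ) = 3 * 3 from rfl, pow_mul, hχ3, one_pow]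
  have h5 : χ ^ 5 ≠ 1 := by
    rw [show (5 : ℕ) = 3 + 2 from rfl, pow_add, hχ3, one_mul]; exact hχ2
  have h7 : χ ^ 7 ≠ 1 := by
    rw [show (7 : ℕ) = 6 + 1 from rfl, pow_add, h6, one_mul, pow_one]; exact hχ1
  have h8 : χ ^ 8 ≠ 1 := by
    rw [show (8 : ℕ) = 6 + 2 from rfl, pow_add, h6, one_mul]; exact hχ2
  have h10 : χ ^ 10 ≠ 1 := by
    rw [show (10 : ℕ) = 9 + 1 from rfl, pow_add, h9, one_mul, pow_one]; exact hχ1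
  -- expand the fifth power over units
  have hunits : ∑ u : Fˣ, (G ↑u) ^ 5
      = ((Fintype.card F - 1 : ℕ) : R) * (5 * (g₁ * g₂ ^ 4) + 5 * (g₁ ^ 4 * g₂)) := by
    calc ∑ u : Fˣ, (G ↑u) ^ 5
        = ∑ u : Fˣ, ∑ m ∈ Finset.range 6,
            ((χ ↑u) ^ 2 * g₁) ^ m * ((χ ↑u) * g₂) ^ (5 - m) * (Nat.choose 5 m : R) := by
          refine Finset.sum_congr rfl fun u _ => ?_
          rw [hGt u, add_pow]
      _ = ∑ m ∈ Finset.range 6,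
            (∑ u : Fˣ, (χ ↑u) ^ (m + 5)) * (g₁ ^ m * g₂ ^ (5 - m) * (Nat.choose 5 m : R)) := by
          rw [Finset.sum_comm]
          refine Finset.sum_congr rfl fun m hm => ?_
          rw [Finset.sum_mul]
          refine Finset.sum_congr rfl fun u _ => ?_
          have hm5 : m ≤ 5 := by have := Finset.mem_range.mp hm; omega
          have hcomb : (χ ↑u) ^ (2 * m) * (χ ↑u) ^ (5 - m) = (χ ↑u) ^ (m + 5) := by
            rw [← pow_add]
            congr 1
            omega
          rw [mul_pow ((χ ↑u) ^ 2) g₁ m, mul_pow (χ ↑u) g₂ (5 - m), ← pow_mul (χ ↑u) 2 m,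
            ← hcomb]
          ring
      _ = ((Fintype.card F - 1 : ℕ) : R) * (5 * (g₁ * g₂ ^ 4) + 5 * (g₁ ^ 4 * g₂)) := by
          rw [Finset.sum_range_succ, Finset.sum_range_succ, Finset.sum_range_succ,
            Finset.sum_range_succ, Finset.sum_range_succ, Finset.sum_range_one]
          norm_num
          rw [hSm 5 h5, hSt 6 h6, hSm 7 h7, hSm 8 h8, hSt 9 h9, hSm 10 h10]
          ring
  -- put it together
  have hq0 : (Fintype.card F : R) ≠ 0 := Nat.cast_ne_zero.mpr Fintype.card_pos.ne'
  have hc1 : ((Fintype.card F - 1 : ℕ) : R) = (Fintype.card F : R) - 1 := by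
    rw [Nat.cast_sub Fintype.card_pos]
    norm_num
  have hNval : (N : R) = (Fintype.card F : R) ^ 4
      + 10 * ((Fintype.card F : R) - 1) * (Fintype.card F : R) * p := by
    refine mul_right_cancel₀ hq0 ?_
    rw [← stepA, hsplit, hunits, hc1]
    have hv : 5 * (g₁ * g₂ ^ 4) + 5 * (g₁ ^ 4 * g₂)
        = 5 * (g₁ * g₂) * g₂ ^ 3 + 5 * g₁ ^ 3 * (g₁ * g₂) := by ring
    rw [hv, hprod, hcube1, hcube2]
    ring
  have h1p : (1 : ℕ) ≤ p ^ 2 := by nlinarith [hp.two_le]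
  have htarget : ((1 + (p ^ 2 - 1) * (1 + p ^ 2 + p ^ 4 + p ^ 6 + 10 * p ^ 3) : ℕ) : R)
      = (Fintype.card F : R) ^ 4
        + 10 * ((Fintype.card F : R) - 1) * (Fintype.card F : R) * p := by
    have hc : (Fintype.card F : R) = (p : R) ^ 2 := by rw [hcard]; push_cast; ring
    rw [Nat.cast_add, Nat.cast_mul, Nat.cast_sub h1p, hc]
    push_cast
    ring
  have hfin : (N : R) = ((1 + (p ^ 2 - 1) * (1 + p ^ 2 + p ^ 4 + p ^ 6 + 10 * p ^ 3) : ℕ) : R) :=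
    hNval.trans htarget.symm
  rw [hNc]
  exact_mod_cast hfin
end

section
/- Let p be a prime with p ≡ 1 (mod 3), and let (a, b) be the unique pair of integers with b > 0, a ≡ 1 (mod 3), and 4p = a² + 27b². Then the number of solutions (x₁,…,x₅) ∈ 𝔽_p⁵ of x₁³ + x₂³ + x₃³ + x₄³ + x₅³ = 0 equals 1 + (p − 1)·(1 + p + p² + p³ + 5ap); equivalently, the Fermat cubic threefold has exactly 1 + p + p² + p³ + 5ap points in ℙ⁴(𝔽_p). -/
/-!
Counting points with an additive character `ψ` of `𝔽_p` and a cubic character `χ` gives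
`p · N = ∑_y (∑_t ψ(y t³))⁵`. For `y ≠ 0` the inner sum is `χ²(y) g(χ) + χ(y) g(χ²)`, so by
orthogonality only the mixed terms `g(χ)⁴ g(χ²)` and `g(χ) g(χ²)⁴` survive, and these reduce to
`p² J` and `p² J̄` for the Jacobi sum `J = J(χ, χ)`. Finally `J ≡ -1 mod 3` in `ℤ[ω]` and
`J J̄ = p` force `J + J̄` to be an integer `A ≡ 1 (mod 3)` with `4p = A² + 27B²`, and such an
`A` is unique.
-/

open Finset ComplexConjugate

theorem AddChar.map_sum_eq_prod {ι A M : Type*} [AddCommMonoid A] [CommMonoid M]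
    (ψ : AddChar A M) (s : Finset ι) (f : ι → A) :
    ψ (∑ i ∈ s, f i) = ∏ i ∈ s, ψ (f i) := by
  classical
  induction s using Finset.induction with
  | empty => simp
  | insert _ _ h ih => rw [sum_insert h, prod_insert h, ψ.map_add_eq_mul, ih]

theorem AddChar.card_sum_eq_zero_mul_card {F R : Type*} [Field F] [Fintype F] [DecidableEq F]
    [CommRing R] [IsDomain R] {ψ : AddChar F R} (hψ : ψ.IsPrimitive) (f : F → F) (m : ℕ) :
    (#{x : Fin m → F | ∑ i, f (x i) = 0} : R) * Fintype.card F =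
      ∑ y, (∑ t, ψ (y * f t)) ^ m := by
  calc (#{x : Fin m → F | ∑ i, f (x i) = 0} : R) * Fintype.card F
      = ∑ x : Fin m → F, ∑ y, ψ (y * ∑ i, f (x i)) := by
        simp only [AddChar.sum_mulShift _ hψ]
        rw [← Nat.cast_sum, ← sum_filter, sum_const, smul_eq_mul, Nat.cast_mul]
    _ = ∑ y, (∑ t, ψ (y * f t)) ^ m := by
        rw [sum_comm]
        refine sum_congr rfl fun y _ => ?_
        rw [Fintype.sum_pow]
        exact sum_congr rfl fun x _ => by rw [mul_sum, ψ.map_sum_eq_prod]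

theorem FiniteField.exists_isPrimitiveRoot_of_dvd {F : Type*} [Field F] [Fintype F] {n : ℕ}
    (h : n ∣ Fintype.card F - 1) : ∃ ζ : F, IsPrimitiveRoot ζ n := by
  classical
  have hq : Fintype.card F - 1 ≠ 0 := by have := Fintype.one_lt_card (α := F); omega
  obtain ⟨g, hg⟩ := IsCyclic.exists_ofOrder_eq_natCard (α := Fˣ)
  rw [Nat.card_eq_fintype_card, Fintype.card_units] at hg
  have hgen : IsPrimitiveRoot (g : F) (Fintype.card F - 1) :=
    IsPrimitiveRoot.coe_units_iff.mpr (hg ▸ IsPrimitiveRoot.orderOf g)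
  obtain ⟨m, hm⟩ := h
  have hm0 : m ≠ 0 := by rintro rfl; exact hq hm
  refine ⟨(g : F) ^ m, ?_⟩
  simpa [hm, Nat.mul_div_cancel _ (Nat.pos_of_ne_zero hm0)] using
    hgen.pow_of_dvd hm0 (hm ▸ dvd_mul_left m n)

theorem inv_eq_sq_of_orderOf_eq_three {G : Type*} [Group G] {g : G} (hg : orderOf g = 3) :
    g⁻¹ = g ^ 2 :=
  inv_eq_of_mul_eq_one_right <| by
    rw [← pow_succ', show 2 + 1 = orderOf g by omega, pow_orderOf_eq_one]

theorem orderOf_sq_of_orderOf_eq_three {G : Type*} [Monoid G] {g : G} (hg : orderOf g = 3) :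
    orderOf (g ^ 2) = 3 := by
  rw [orderOf_pow' g two_ne_zero, hg]; rfl

namespace MulChar

variable {F R : Type*} [Field F] [Fintype F] [CommRing R]

theorem jacobiSum_inv_inv (χ φ : MulChar F ℂ) : jacobiSum χ⁻¹ φ⁻¹ = conj (jacobiSum χ φ) := by
  simp only [jacobiSum, map_sum, map_mul, starRingEnd_apply, star_apply']

theorem exists_pow_orderOf_eq_of_apply_eq_one (χ : MulChar F R) {u : F} (hu : u ≠ 0)
    (h : χ u = 1) : ∃ α, α ^ orderOf χ = u := by
  obtain ⟨g, hg⟩ := IsCyclic.exists_generator (α := Fˣ)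
  obtain ⟨k, hk⟩ : ∃ k : ℕ, g ^ k = hu.isUnit.unit := by
    rw [← Submonoid.mem_powers_iff, mem_powers_iff_mem_zpowers]; exact hg _
  have hχk : χ ^ k = 1 := by
    rw [eq_iff hg, pow_apply_coe, one_apply_coe, ← map_pow, ← Units.val_pow_eq_pow_val, hk,
      IsUnit.unit_spec, h]
  obtain ⟨m, rfl⟩ := orderOf_dvd_of_pow_eq_one hχk
  exact ⟨(g : F) ^ m, by rw [← pow_mul, mul_comm, ← Units.val_pow_eq_pow_val, hk, IsUnit.unit_spec]⟩

variable [IsDomain R]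

theorem gaussSum_pow_three {χ : MulChar F R} (hχ : orderOf χ = 3) {ψ : AddChar F R}
    (hψ : ψ.IsPrimitive) :
    gaussSum χ ψ ^ 3 = Fintype.card F * jacobiSum χ χ := by
  have h := gaussSum_pow_eq_prod_jacobiSum (hχ ▸ (by norm_num : 2 ≤ 3)) hψ
  rw [hχ, show Ico 1 (3 - 1) = {1} by rfl, prod_singleton, pow_one,
    val_neg_one_eq_one_of_odd_order (by decide : Odd 3) (hχ ▸ pow_orderOf_eq_one χ), one_mul] at h
  exact h

theorem gaussSum_mul_gaussSum_sq {χ : MulChar F R} (hχ : orderOf χ = 3) {ψ : AddChar F R}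
    (hψ : ψ.IsPrimitive) :
    gaussSum χ ψ * gaussSum (χ ^ 2) ψ = Fintype.card F := by
  have hχ1 : χ ≠ 1 := by rintro rfl; simp at hχ
  have h := gaussSum_mul_gaussSum_pow_orderOf_sub_one hχ1 hψ
  rwa [hχ, val_neg_one_eq_one_of_odd_order (by decide : Odd 3) (hχ ▸ pow_orderOf_eq_one χ),
    one_mul] at h

variable [DecidableEq F]

theorem card_pow_orderOf_eq (χ : MulChar F R) {u : F} (hu : u ≠ 0) :
    (#{t | t ^ orderOf χ = u} : R) = ∑ i ∈ range (orderOf χ), (χ ^ i) u := by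
  obtain ⟨ζ, hζ⟩ := FiniteField.exists_isPrimitiveRoot_of_dvd χ.orderOf_dvd_card_sub_one
  set n := orderOf χ
  have hn : n ≠ 0 := χ.orderOf_pos.ne'
  have hpow : ∀ i, (χ ^ i) u = χ u ^ i := fun i => by
    simpa using pow_apply_coe χ i hu.isUnit.unit
  simp_rw [hpow]
  by_cases hroot : ∃ α, α ^ n = u
  · have hcard : #{t | t ^ n = u} = n := by
      classical
      calc #{t | t ^ n = u} = Multiset.card (Polynomial.nthRoots n u) := by
            rw [← Multiset.toFinset_card_of_nodup (hζ.nthRoots_nodup hu)]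
            congr 1
            ext t
            simp [Polynomial.mem_nthRoots (Nat.pos_of_ne_zero hn)]
        _ = n := by rw [hζ.card_nthRoots, if_pos hroot]
    obtain ⟨α, rfl⟩ := hroot
    have hα : α ≠ 0 := by rintro rfl; exact hu (zero_pow hn)
    rw [hcard, map_pow, ← pow_apply' χ hn, pow_orderOf_eq_one, one_apply hα.isUnit]
    simp
  · have hne : χ u ≠ 1 := fun h => hroot (exists_pow_orderOf_eq_of_apply_eq_one χ hu h)
    have hgeom := geom_sum_mul (χ u) n
    rw [← hpow, pow_orderOf_eq_one, one_apply hu.isUnit, sub_self] at hgeom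
    rw [(mul_eq_zero.mp hgeom).resolve_right (sub_ne_zero.mpr hne), card_eq_zero.mpr,
      Nat.cast_zero]
    exact filter_eq_empty_iff.mpr fun t _ ht => hroot ⟨t, ht⟩

theorem sum_addChar_mul_pow_orderOf (χ : MulChar F R) {ψ : AddChar F R} (hψ : ψ.IsPrimitive)
    {y : F} (hy : y ≠ 0) :
    ∑ t, ψ (y * t ^ orderOf χ) = ∑ i ∈ Ico 1 (orderOf χ), (χ ^ i)⁻¹ y * gaussSum (χ ^ i) ψ := by
  set n := orderOf χ
  have hn : n ≠ 0 := χ.orderOf_pos.ne'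
  -- Every `χ ^ i`, the trivial character included, vanishes at `0`.
  have hfiber : ∀ u, (#{t | t ^ n = u} : R) * ψ (y * u) =
      (if u = 0 then 1 else 0) + ∑ i ∈ range n, (χ ^ i) u * ψ (y * u) := by
    intro u
    rcases eq_or_ne u 0 with rfl | hu
    · simp [hn, filter_eq']
    · rw [card_pow_orderOf_eq χ hu, sum_mul, if_neg hu, zero_add]
  have hgauss : ∀ i, ∑ u, (χ ^ i) u * ψ (y * u) = (χ ^ i)⁻¹ y * gaussSum (χ ^ i) ψ := fun i => by
    simpa [gaussSum] using gaussSum_mulShift_eq (χ ^ i) ψ hy.isUnit.unit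
  have hψ1 : ψ ≠ 1 := by simpa using hψ one_ne_zero
  calc ∑ t, ψ (y * t ^ n) = ∑ u, (#{t | t ^ n = u} : R) * ψ (y * u) := by
        rw [← sum_fiberwise' univ (· ^ n) fun u => ψ (y * u)]
        simp [sum_const]
    _ = 1 + ∑ i ∈ range n, (χ ^ i)⁻¹ y * gaussSum (χ ^ i) ψ := by
        simp only [hfiber, sum_add_distrib, sum_ite_eq', mem_univ, if_true]
        rw [sum_comm]
        simp only [hgauss]
    _ = ∑ i ∈ Ico 1 n, (χ ^ i)⁻¹ y * gaussSum (χ ^ i) ψ := by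
        rw [range_eq_Ico, sum_eq_sum_Ico_succ_bot (Nat.pos_of_ne_zero hn), pow_zero, inv_one,
          one_apply hy.isUnit, gaussSum_one_left hψ1]
        ring

variable {χ : MulChar F R}

theorem sum_addChar_mul_cube (hχ : orderOf χ = 3) {ψ : AddChar F R} (hψ : ψ.IsPrimitive) {y : F}
    (hy : y ≠ 0) :
    ∑ t, ψ (y * t ^ 3) = (χ ^ 2) y * gaussSum χ ψ + χ y * gaussSum (χ ^ 2) ψ := by
  have h := χ.sum_addChar_mul_pow_orderOf hψ hy
  rw [hχ, show Ico 1 3 = {1, 2} by rfl, sum_pair (by decide : (1 : ℕ) ≠ 2), pow_one,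
    ← inv_eq_sq_of_orderOf_eq_three hχ, inv_inv, inv_eq_sq_of_orderOf_eq_three hχ] at h
  exact h

theorem sum_sq_apply_mul_add_apply_mul_pow_five (hχ : orderOf χ = 3) (a b : R) :
    ∑ y, ((χ ^ 2) y * a + χ y * b) ^ 5 = 5 * (Fintype.card F - 1) * (a * b) * (a ^ 3 + b ^ 3) := by
  have hreduce : ∀ {c : R}, c ^ 3 = 1 → (c ^ 2 * a + c * b) ^ 5 =
      5 * a * b * (a ^ 3 + b ^ 3) + (a ^ 5 + 10 * a ^ 2 * b ^ 3) * c +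
        (b ^ 5 + 10 * a ^ 3 * b ^ 2) * c ^ 2 := fun {c} hc => by
    linear_combination (c ^ 2 * (c * a + b) ^ 5 + a ^ 4 * (5 * b + a * c) + 5 * a * b ^ 4 +
      10 * a ^ 2 * b ^ 3 * c + 10 * a ^ 3 * b ^ 2 * c ^ 2 + 5 * a ^ 4 * b * c ^ 3 +
      a ^ 5 * c ^ 4) * hc
  have hpoint : ∀ y, ((χ ^ 2) y * a + χ y * b) ^ 5 =
      5 * a * b * (a ^ 3 + b ^ 3) * (1 : MulChar F R) y + (a ^ 5 + 10 * a ^ 2 * b ^ 3) * χ y +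
        (b ^ 5 + 10 * a ^ 3 * b ^ 2) * (χ ^ 2) y := by
    intro y
    rcases eq_or_ne y 0 with rfl | hy
    · simp
    · rw [pow_apply' χ two_ne_zero, one_apply hy.isUnit, mul_one]
      refine hreduce ?_
      rw [← pow_apply' χ three_ne_zero, ← hχ, pow_orderOf_eq_one, one_apply hy.isUnit]
  have hχ1 : χ ≠ 1 := by rintro rfl; simp at hχ
  have hχ2 : χ ^ 2 ≠ 1 := by
    intro h; have := orderOf_dvd_of_pow_eq_one h; rw [hχ] at this; norm_num at this
  simp only [hpoint, sum_add_distrib, ← mul_sum, sum_one_eq_card_units,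
    sum_eq_zero_of_ne_one hχ1, sum_eq_zero_of_ne_one hχ2, Fintype.card_units]
  rw [Nat.cast_sub Fintype.card_pos]
  ring

theorem card_sum_cube_eq_zero (hχ : orderOf χ = 3) {ψ : AddChar F R} (hψ : ψ.IsPrimitive)
    (hq : (Fintype.card F : R) ≠ 0) :
    (#{x : Fin 5 → F | ∑ i, x i ^ 3 = 0} : R) = Fintype.card F ^ 4 +
      5 * (Fintype.card F - 1) * Fintype.card F * (jacobiSum χ χ + jacobiSum (χ ^ 2) (χ ^ 2)) := by
  have hsplit : ∀ y, (∑ t, ψ (y * t ^ 3)) ^ 5 =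
      (if y = 0 then (Fintype.card F : R) ^ 5 else 0) +
        ((χ ^ 2) y * gaussSum χ ψ + χ y * gaussSum (χ ^ 2) ψ) ^ 5 := by
    intro y
    rcases eq_or_ne y 0 with rfl | hy
    · simp
    · rw [sum_addChar_mul_cube hχ hψ hy, if_neg hy, zero_add]
  have hcount := AddChar.card_sum_eq_zero_mul_card hψ (· ^ 3) 5
  rw [sum_congr rfl fun y _ => hsplit y, sum_add_distrib, sum_ite_eq', if_pos (mem_univ _),
    sum_sq_apply_mul_add_apply_mul_pow_five hχ, gaussSum_mul_gaussSum_sq hχ hψ,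
    gaussSum_pow_three hχ hψ, gaussSum_pow_three (orderOf_sq_of_orderOf_eq_three hχ) hψ] at hcount
  refine mul_right_cancel₀ hq ?_
  linear_combination hcount

end MulChar

theorem mul_sub_mul_eq_zero_of_dvd_of_sq_add_twentySeven_mul_sq {p a b c d : ℤ} (hp : 0 < p)
    (hab : 4 * p = a ^ 2 + 27 * b ^ 2) (hcd : 4 * p = c ^ 2 + 27 * d ^ 2) (h : p ∣ a * d - b * c) :
    a * d - b * c = 0 := by
  have hid : 16 * p ^ 2 = (a * c + 27 * b * d) ^ 2 + 27 * (a * d - b * c) ^ 2 := by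
    linear_combination 4 * p * hab + (a ^ 2 + 27 * b ^ 2) * hcd
  refine Int.eq_zero_of_abs_lt_dvd h (abs_lt_of_sq_lt_sq ?_ hp.le)
  nlinarith [sq_nonneg (a * c + 27 * b * d)]

theorem eq_of_four_mul_eq_sq_add_twentySeven_mul_sq {p : ℕ} (hp : p.Prime) {a b c d : ℤ}
    (ha : a % 3 = 1) (hc : c % 3 = 1) (hab : (4 * p : ℤ) = a ^ 2 + 27 * b ^ 2)
    (hcd : (4 * p : ℤ) = c ^ 2 + 27 * d ^ 2) : a = c := by
  have hp0 : (0 : ℤ) < p := by exact_mod_cast hp.pos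
  have key : (a * d - b * c) * (a * d + b * c) = p * (4 * (d ^ 2 - b ^ 2)) := by
    linear_combination b ^ 2 * hcd - d ^ 2 * hab
  have hzero : (a * d - b * c) * (a * d + b * c) = 0 := by
    rcases (Nat.prime_iff_prime_int.mp hp).dvd_or_dvd ⟨_, key⟩ with h | h
    · rw [mul_sub_mul_eq_zero_of_dvd_of_sq_add_twentySeven_mul_sq hp0 hab hcd h, zero_mul]
    · have := mul_sub_mul_eq_zero_of_dvd_of_sq_add_twentySeven_mul_sq hp0 (b := -b)
        (by rw [hab]; ring) hcd (by simpa using h)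
      rw [show a * d + b * c = a * d - -b * c by ring, this, mul_zero]
  have hbd : b ^ 2 = d ^ 2 := by
    rw [hzero] at key
    have := (mul_eq_zero.mp key.symm).resolve_left hp0.ne'
    linarith
  have hac : (a - c) * (a + c) = 0 := by linear_combination hcd - hab - 27 * hbd
  rcases mul_eq_zero.mp hac with h | h <;> omega

theorem exists_eq_add_mul_of_mem_adjoin {R : Type*} [CommRing R] {ω : R} (hω : ω ^ 2 + ω + 1 = 0)
    {x : R} (hx : x ∈ Algebra.adjoin ℤ {ω}) : ∃ s t : ℤ, x = s + t * ω := by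
  induction hx using Algebra.adjoin_induction with
  | mem x hx => exact ⟨0, 1, by simp [Set.mem_singleton_iff.mp hx]⟩
  | algebraMap r => exact ⟨r, 0, by simp⟩
  | add x y _ _ hx hy =>
    obtain ⟨s, t, rfl⟩ := hx
    obtain ⟨s', t', rfl⟩ := hy
    exact ⟨s + s', t + t', by push_cast; ring⟩
  | mul x y _ _ hx hy =>
    obtain ⟨s, t, rfl⟩ := hx
    obtain ⟨s', t', rfl⟩ := hy
    exact ⟨s * s' - t * t', s * t' + t * s' - t * t', by push_cast; linear_combination t * t' * hω⟩

theorem exists_add_conj_eq_of_eq_neg_one_add {ω : ℂ} (hω : IsPrimitiveRoot ω 3) {J z : ℂ}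
    (hz : z ∈ Algebra.adjoin ℤ {ω}) (hJ : J = -1 + z * (ω - 1) ^ 2) :
    ∃ A B : ℤ, A % 3 = 1 ∧ J + conj J = A ∧ 4 * (J * conj J) = A ^ 2 + 27 * B ^ 2 := by
  have hω3 : ω ^ 2 + ω + 1 = 0 := by
    have := hω.geom_sum_eq_zero (by norm_num)
    simp only [sum_range_succ, sum_range_zero] at this
    linear_combination this
  have hconj : conj ω = -1 - ω := by
    rw [← Complex.inv_eq_conj (hω.norm'_eq_one three_ne_zero)]
    exact inv_eq_of_mul_eq_one_right (by linear_combination -hω3)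
  obtain ⟨s, t, rfl⟩ := exists_eq_add_mul_of_mem_adjoin hω3 hz
  have hJ' : J = (3 * t - 1 : ℤ) + (3 * (t - s) : ℤ) * ω := by
    rw [hJ]; push_cast; linear_combination (s + t * ω - 3 * t) * hω3
  refine ⟨3 * (s + t) - 2, t - s, by omega, ?_, ?_⟩ <;>
    simp only [hJ', map_add, map_mul, map_intCast, hconj] <;> push_cast
  · ring
  · linear_combination (-36 * (t - s) ^ 2 : ℂ) * hω3

theorem exists_card_sum_cube_eq_zero (p : ℕ) [Fact p.Prime] (hmod : p % 3 = 1) :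
    ∃ A B : ℤ, A % 3 = 1 ∧ (4 * p : ℤ) = A ^ 2 + 27 * B ^ 2 ∧
      (#{x : Fin 5 → ZMod p | ∑ i, x i ^ 3 = 0} : ℤ) = p ^ 4 + 5 * (p - 1) * p * A := by
  have hdvd : 3 ∣ Fintype.card (ZMod p) - 1 := by
    rw [ZMod.card]; have := (Fact.out : p.Prime).two_le; omega
  have hω := Complex.isPrimitiveRoot_exp 3 three_ne_zero
  obtain ⟨χ, hχ⟩ := MulChar.exists_mulChar_orderOf (ZMod p) hdvd hω
  have hχ3 : χ ^ 3 = 1 := hχ ▸ pow_orderOf_eq_one χ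
  have hcount := MulChar.card_sum_cube_eq_zero hχ (ZMod.isPrimitive_stdAddChar p)
    (by simp [(Fact.out : p.Prime).ne_zero])
  have hconj : jacobiSum (χ ^ 2) (χ ^ 2) = conj (jacobiSum χ χ) := by
    rw [← inv_eq_sq_of_orderOf_eq_three hχ, MulChar.jacobiSum_inv_inv]
  have hnorm : jacobiSum χ χ * conj (jacobiSum χ χ) = p := by
    have hχ1 : χ ≠ 1 := by rintro rfl; simp at hχ
    have hχχ : χ * χ ≠ 1 := by
      rw [← sq, Ne, ← orderOf_eq_one_iff, orderOf_sq_of_orderOf_eq_three hχ]; norm_num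
    rw [← MulChar.jacobiSum_inv_inv, jacobiSum_mul_jacobiSum_inv (by
      rw [ringChar.eq_zero, ZMod.ringChar_zmod_n]; exact (Fact.out : p.Prime).ne_zero.symm)
      hχ1 hχ1 hχχ, ZMod.card]
  obtain ⟨z, hz, hJ⟩ := exists_jacobiSum_eq_neg_one_add (by norm_num) hχ3 hχ3 hdvd hω
  obtain ⟨A, B, hA, hsum, hprod⟩ := exists_add_conj_eq_of_eq_neg_one_add hω hz hJ
  refine ⟨A, B, hA, ?_, ?_⟩
  · exact_mod_cast (show (4 * p : ℂ) = A ^ 2 + 27 * B ^ 2 by rw [← hprod, hnorm])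
  · rw [ZMod.card, hconj, hsum] at hcount
    exact_mod_cast hcount

theorem fermat_cubic_count_Fp_one_mod_three_general (p : ℕ) (hp : p.Prime) (hmod : p % 3 = 1)
    (a b : ℤ) (ha : a % 3 = 1) (hrep : (4 * p : ℤ) = a ^ 2 + 27 * b ^ 2) :
    (Nat.card {x : Fin 5 → ZMod p //
        (x 0) ^ 3 + (x 1) ^ 3 + (x 2) ^ 3 + (x 3) ^ 3 + (x 4) ^ 3 = 0} : ℤ)
      = 1 + ((p : ℤ) - 1) * (1 + p + p ^ 2 + p ^ 3 + 5 * a * p) := by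
  have : Fact p.Prime := ⟨hp⟩
  obtain ⟨A, B, hA, hAB, hcount⟩ := exists_card_sum_cube_eq_zero p hmod
  obtain rfl := eq_of_four_mul_eq_sq_add_twentySeven_mul_sq hp ha hA hrep hAB
  rw [Nat.card_eq_fintype_card, Fintype.card_subtype]
  simp only [Fin.sum_univ_five] at hcount
  linear_combination hcount

/-- For a prime `p ≡ 1 (mod 3)` and `(a, b)` the (unique) pair of integers with `b > 0`,
`a ≡ 1 (mod 3)` and `4p = a² + 27b²`, the Fermat cubic `x₁³+x₂³+x₃³+x₄³+x₅³ = 0` has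
exactly `1 + (p − 1)·(1 + p + p² + p³ + 5ap)` solutions in `𝔽_p⁵`; equivalently, the
Fermat cubic threefold has `1 + p + p² + p³ + 5ap` points in `ℙ⁴(𝔽_p)`. -/
theorem fermat_cubic_count_Fp_one_mod_three (p : ℕ) (hp : p.Prime) (hmod : p % 3 = 1)
    (a b : ℤ) (hb : 0 < b) (ha : a % 3 = 1) (hrep : (4 * p : ℤ) = a ^ 2 + 27 * b ^ 2) :
    (Nat.card {x : Fin 5 → ZMod p //
        (x 0) ^ 3 + (x 1) ^ 3 + (x 2) ^ 3 + (x 3) ^ 3 + (x 4) ^ 3 = 0} : ℤ)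
      = 1 + ((p : ℤ) - 1) * (1 + p + p ^ 2 + p ^ 3 + 5 * a * p) :=
  fermat_cubic_count_Fp_one_mod_three_general p hp hmod a b ha hrep
end

section
/- Let p ≥ 5 be a prime, p ≠ 11, such that −11 is not a square in 𝔽_p. Then the number of solutions (x₁,…,x₅) ∈ 𝔽_p⁵ of x₁²x₂ + x₂²x₃ + x₃²x₄ + x₄²x₅ + x₅²x₁ = 0 equals p⁴; equivalently, the Klein cubic threefold has exactly 1 + p + p² + p³ points in ℙ⁴(𝔽_p). -/
/-!
Write `K(x) = Σᵢ xᵢ² xᵢ₊₁` with indices mod 5 and `q = |𝔽|`. On the torus `(𝔽ˣ)⁵` the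
endomorphism `θ(u)ᵢ = uᵢ² uᵢ₊₁ / u₀²` has exponent matrix of determinant 11; concretely
`θ(u) = 1` forces `u = (s, 1, s², s⁻², s⁶)` with `s¹¹ = 1`. So `θ` is an automorphism when
`11 ∤ q - 1`, and since `K(u) = u₀² Σᵢ θ(u)ᵢ`, the torus zeros of `K` are equinumerous with the
torus points of the hyperplane `Σᵢ yᵢ = 0`.

A zero with some vanishing coordinate is sorted by its first one, `x_k = 0`. Reading the other
coordinates backwards from `x_{k-1}` turns `K` into the chain form `z₀z₁² + z₁z₂² + z₂z₃²` with
`z₀, …, z_{k-1}` nonzero, and chain forms are counted recursively by solving for `z₀`, in which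
they are linear. The two counts add up to `q⁴`. Finally, if `p ≡ 1 (mod 11)` then `-11` is a
square mod `p` by quadratic reciprocity.
-/

open Finset

namespace KleinCubic

section Forms

variable {R : Type*} [CommSemiring R]

def kleinForm (x : Fin 5 → R) : R := ∑ i, x i ^ 2 * x (i + 1)

def chainForm {n : ℕ} (z : Fin (n + 1) → R) : R := ∑ i : Fin n, z i.castSucc * z i.succ ^ 2

lemma chainForm_cons {n : ℕ} (a : R) (w : Fin (n + 1) → R) :
    chainForm (Fin.cons a w : Fin (n + 1 + 1) → R) = a * w 0 ^ 2 + chainForm w := by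
  simp [chainForm, Fin.sum_univ_succ]

lemma chainForm_of_head_eq_zero {n : ℕ} {z : Fin (n + 1 + 1) → R} (h : z 0 = 0) :
    chainForm z = chainForm (Fin.tail z) := by
  rw [← Fin.cons_self_tail z, chainForm_cons, Fin.tail_cons, h, zero_mul, zero_add]

lemma kleinForm_comp_sub (k : Fin 5) (y : Fin 5 → R) :
    kleinForm (fun i => y (k - i)) = ∑ i, y i * y (i + 1) ^ 2 := by
  refine (Fintype.sum_equiv (Equiv.subLeft (k - 1)) _ _ fun j => ?_).symm
  simp only [Equiv.subLeft_apply]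
  rw [show k - (k - 1 - j) = j + 1 by abel,
    show k - (k - 1 - j + 1) = j by abel, mul_comm]

lemma kleinForm_comp_sub_of_head_eq_zero (k : Fin 5) {y : Fin 5 → R} (hy : y 0 = 0) :
    kleinForm (fun i => y (k - i)) = chainForm (Fin.tail y) := by
  simp [kleinForm_comp_sub, Fin.sum_univ_five, chainForm, Fin.sum_univ_three, Fin.tail, hy]

end Forms

section Tuples

lemma forall_lt_succ_ne_zero_iff {M : Type*} [Zero M] {n k : ℕ} (z : Fin (n + 1) → M) :
    (∀ i : Fin (n + 1), (i : ℕ) < k + 1 → z i ≠ 0) ↔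
      z 0 ≠ 0 ∧ ∀ i : Fin n, (i : ℕ) < k → Fin.tail z i ≠ 0 := by
  simp [Fin.forall_fin_succ, Fin.tail]

lemma forall_lt_iff_forall_sub_succ {n : ℕ} {P : Fin (n + 1) → Prop} (k : Fin (n + 1)) :
    (∀ i < k, P i) ↔ ∀ m : Fin n, (m : ℕ) < k → P (k - m.succ) := by
  constructor
  · intro h m hm
    have hle : m.succ ≤ k := Fin.le_def.2 (by simpa using hm)
    exact h _ (Fin.lt_def.2 (by rw [Fin.sub_val_of_le hle, Fin.val_succ]; omega))
  · intro h i hi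
    rw [Fin.lt_def] at hi
    have hle : (⟨k - 1 - i, by omega⟩ : Fin n).succ ≤ k := Fin.le_def.2 (by simp; omega)
    convert h ⟨k - 1 - i, by omega⟩ (by simp; omega)
    ext
    rw [Fin.sub_val_of_le hle, Fin.val_succ]
    simp only
    omega

variable {α : Type*} [Fintype α]

lemma card_filter_cons {m : ℕ} (A : α → Prop) (P : (Fin m → α) → Prop) [DecidablePred A]
    [DecidablePred P] :
    #{z : Fin (m + 1) → α | A (z 0) ∧ P (Fin.tail z)} = #{a | A a} * #{w | P w} := by
  rw [← card_product, ← filter_product, univ_product_univ]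
  exact card_equiv (Fin.consEquiv fun _ => α).symm (by simp)

lemma card_filter_eq_sum_first_zero [DecidableEq α] [Zero α] {n : ℕ} (Q : (Fin n → α) → Prop)
    [DecidablePred Q] :
    #{x : Fin n → α | Q x} =
      ∑ k : Fin n, #{x | x k = 0 ∧ (∀ i < k, x i ≠ 0) ∧ Q x} + #{x | (∀ i, x i ≠ 0) ∧ Q x} := by
  rw [← card_filter_add_card_filter_not (s := {x | Q x}) (fun x => ∃ i, x i = 0),
    filter_filter, filter_filter]
  congr 1
  · rw [← card_biUnion]
    · congr 1
      ext x
      simp only [mem_filter, mem_univ, true_and, mem_biUnion]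
      constructor
      · rintro ⟨hQ, h⟩
        exact ⟨Fin.find _ h, Fin.find_spec h, fun i hi => Fin.find_min h hi, hQ⟩
      · rintro ⟨k, hk, -, hQ⟩
        exact ⟨hQ, k, hk⟩
    · intro k _ l _ hkl
      simp only [disjoint_filter]
      intro x _ hk hl
      rcases lt_or_gt_of_ne hkl with h | h
      · exact hl.2.1 k h hk.1
      · exact hk.2.1 l h hl.1
  · simp [and_comm]

end Tuples

variable {F : Type*} [Field F] [Fintype F] [DecidableEq F]

section Counting

lemma card_filter_ne_zero : #{a : F | a ≠ 0} = Fintype.card F - 1 := by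
  simp [filter_ne', card_univ]

lemma card_head_ne_zero (n : ℕ) :
    #{w : Fin (n + 1) → F | w 0 ≠ 0} = (Fintype.card F - 1) * Fintype.card F ^ n := by
  have h := card_filter_cons (· ≠ 0) (fun _ : Fin n → F => True)
  simp only [and_true, filter_true, card_univ, Fintype.card_fun, Fintype.card_fin] at h
  rw [h, card_filter_ne_zero]

lemma card_forall_lt_ne_zero {m k : ℕ} (hk : k ≤ m) :
    #{z : Fin m → F | ∀ i : Fin m, (i : ℕ) < k → z i ≠ 0} =
      (Fintype.card F - 1) ^ k * Fintype.card F ^ (m - k) := by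
  induction m generalizing k with
  | zero => simp_all
  | succ m ih =>
    cases k with
    | zero => simp [card_univ]
    | succ k =>
      simp_rw [forall_lt_succ_ne_zero_iff]
      rw [card_filter_cons (· ≠ 0) (fun w : Fin m → F => ∀ i : Fin m, (i : ℕ) < k → w i ≠ 0),
        card_filter_ne_zero, ih (by omega), Nat.add_sub_add_right, pow_succ']
      ring

lemma card_filter_mul_add_eq_zero {α : Type*} [Fintype α] [DecidableEq α] (A : F → Prop)
    (P : α → Prop) [DecidablePred A] [DecidablePred P] (c d : α → F) :
    #{x : F × α | (A x.1 ∧ P x.2) ∧ x.1 * c x.2 + d x.2 = 0} =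
      #{w | P w ∧ c w ≠ 0 ∧ A (-d w / c w)} + #{a | A a} * #{w | P w ∧ c w = 0 ∧ d w = 0} := by
  rw [← card_filter_add_card_filter_not (p := fun x : F × α => c x.2 ≠ 0), filter_filter,
    filter_filter]
  congr 1
  · apply card_nbij' Prod.snd (fun w => (-d w / c w, w))
    · rintro ⟨a, w⟩ h
      simp only [coe_filter, mem_univ, true_and, Set.mem_ofPred_eq] at h ⊢
      obtain ⟨⟨⟨hA, hP⟩, h⟩, hc⟩ := h
      refine ⟨hP, hc, ?_⟩
      convert hA using 1
      rw [div_eq_iff hc]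
      linear_combination -h
    · intro w h
      simp only [coe_filter, mem_univ, true_and, Set.mem_ofPred_eq] at h ⊢
      obtain ⟨hP, hc, hA⟩ := h
      refine ⟨⟨⟨hA, hP⟩, ?_⟩, hc⟩
      field_simp
      ring
    · rintro ⟨a, w⟩ h
      simp only [coe_filter, mem_univ, true_and, Set.mem_ofPred_eq] at h
      obtain ⟨⟨-, h⟩, hc⟩ := h
      simp only [Prod.mk.injEq, and_true]
      rw [div_eq_iff hc]
      linear_combination -h
    · intro w _
      rfl
  · rw [← card_product, ← filter_product, univ_product_univ]
    congr 1
    ext ⟨a, w⟩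
    simp only [mem_filter, mem_univ, true_and, not_not]
    constructor
    · rintro ⟨⟨⟨hA, hP⟩, h⟩, hc⟩
      simp_all
    · rintro ⟨hA, hP, hc, h⟩
      simp_all

lemma card_forall_ne_zero_eq_card_units {n : ℕ} (Q : (Fin n → F) → Prop) [DecidablePred Q] :
    #{x : Fin n → F | (∀ i, x i ≠ 0) ∧ Q x} = #{u : Fin n → Fˣ | Q (fun i => u i)} := by
  symm
  apply card_nbij' (fun u i => (u i : F)) (fun x i => if h : x i = 0 then 1 else Units.mk0 (x i) h)
  · intro u hu
    simp_all
  · intro x hx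
    simp_all
  · intro u _
    ext i
    simp
  · intro x hx
    ext i
    simp_all

lemma card_sum_units_eq_zero_succ (n : ℕ) :
    #{u : Fin (n + 1) → Fˣ | ∑ i, (u i : F) = 0} + #{u : Fin n → Fˣ | ∑ i, (u i : F) = 0} =
      (Fintype.card F - 1) ^ n := by
  have h : #{u : Fin (n + 1) → Fˣ | ∑ i, (u i : F) = 0} =
      #{w : Fin n → Fˣ | ∑ i, (w i : F) ≠ 0} := by
    refine card_bij (fun u _ => Fin.tail u) (fun u hu => ?_) (fun u hu v hv huv => ?_)
      fun w hw => ?_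
    · simp only [mem_filter, mem_univ, true_and, Fin.sum_univ_succ] at hu ⊢
      intro h
      simp only [Fin.tail] at h
      rw [h, add_zero] at hu
      exact (u 0).ne_zero hu
    · simp only [mem_filter, mem_univ, true_and, Fin.sum_univ_succ] at hu hv
      have htail : ∑ i : Fin n, (u i.succ : F) = ∑ i : Fin n, (v i.succ : F) := by
        simpa only [Fin.tail] using congrArg (fun w : Fin n → Fˣ => ∑ i, (w i : F)) huv
      have h0 : u 0 = v 0 := Units.ext (by linear_combination hu - hv - htail)
      rw [← Fin.cons_self_tail u, ← Fin.cons_self_tail v, huv, h0]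
    · simp only [mem_filter, mem_univ, true_and] at hw
      refine ⟨Fin.cons (Units.mk0 _ (neg_ne_zero.2 hw)) w, ?_, Fin.tail_cons _ _⟩
      simp [Fin.sum_univ_succ]
  rw [h, add_comm, card_filter_add_card_filter_not, card_univ, Fintype.card_fun, Fintype.card_fin,
    Fintype.card_units]

end Counting

section Chains

lemma card_chainForm_cons {n : ℕ} (A : F → Prop) (P : (Fin (n + 1) → F) → Prop)
    [DecidablePred A] [DecidablePred P] :
    #{z : Fin (n + 1 + 1) → F | (A (z 0) ∧ P (Fin.tail z)) ∧ chainForm z = 0} =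
      #{w | P w ∧ w 0 ≠ 0 ∧ A (-chainForm w / w 0 ^ 2)} +
        #{a | A a} * #{w | P w ∧ w 0 = 0 ∧ chainForm w = 0} := by
  have h := card_filter_mul_add_eq_zero A P (fun w : Fin (n + 1) → F => w 0 ^ 2) chainForm
  simp only [ne_eq, pow_eq_zero_iff two_ne_zero] at h
  rw [← h]
  exact (card_equiv (Fin.consEquiv fun _ => F) (by simp [Fin.consEquiv, chainForm_cons])).symm

variable (F) in
def chainZeroCount (n k : ℕ) : ℕ :=
  #{z : Fin (n + 1) → F | (∀ i : Fin (n + 1), (i : ℕ) < k → z i ≠ 0) ∧ chainForm z = 0}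

lemma chainZeroCount_zero (k : ℕ) :
    chainZeroCount F 0 k = #{z : Fin 1 → F | ∀ i : Fin 1, (i : ℕ) < k → z i ≠ 0} := by
  simp [chainZeroCount, chainForm]

lemma card_head_zero_chainForm_zero_fin_one :
    #{w : Fin 1 → F | w 0 = 0 ∧ chainForm w = 0} = 1 := by
  rw [card_eq_one]
  exact ⟨0, by ext w; simp [chainForm, funext_iff, Fin.forall_fin_one]⟩

lemma card_head_zero_chainForm_zero_succ (n : ℕ) :
    #{w : Fin (n + 1 + 1) → F | w 0 = 0 ∧ chainForm w = 0} = chainZeroCount F n 0 := by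
  have h := card_filter_cons (· = 0) (fun v : Fin (n + 1) → F => chainForm v = 0)
  rw [filter_eq', if_pos (mem_univ _), card_singleton, one_mul] at h
  simp only [chainZeroCount, not_lt_zero, false_imp_iff, implies_true, true_and, ← h]
  exact congrArg card (filter_congr fun w _ =>
    and_congr_right fun h0 => by rw [chainForm_of_head_eq_zero h0])

lemma chainZeroCount_succ_zero (n : ℕ) :
    chainZeroCount F (n + 1) 0 = (Fintype.card F - 1) * Fintype.card F ^ n +
      Fintype.card F * #{w : Fin (n + 1) → F | w 0 = 0 ∧ chainForm w = 0} := by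
  have h := card_chainForm_cons (fun _ : F => True) (fun _ : Fin (n + 1) → F => True)
  simp only [true_and, and_true] at h
  simp [chainZeroCount, h, ← card_head_ne_zero]

lemma chainZeroCount_succ_one (n : ℕ) :
    chainZeroCount F (n + 1) 1 + chainZeroCount F n 1 = (Fintype.card F - 1) * Fintype.card F ^ n +
      (Fintype.card F - 1) * #{w : Fin (n + 1) → F | w 0 = 0 ∧ chainForm w = 0} := by
  have h := card_chainForm_cons (· ≠ 0) (fun _ : Fin (n + 1) → F => True)
  have hsplit := card_filter_add_card_filter_not (s := {w : Fin (n + 1) → F | w 0 ≠ 0})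
    (fun w => chainForm w = 0)
  rw [filter_filter, filter_filter, card_head_ne_zero] at hsplit
  simp only [ne_eq] at hsplit
  simp only [true_and, and_true, card_filter_ne_zero, ne_eq, div_eq_zero_iff, neg_eq_zero,
    pow_eq_zero_iff two_ne_zero, not_or] at h
  have hdup (w : Fin (n + 1) → F) :
      (¬w 0 = 0 ∧ ¬chainForm w = 0 ∧ ¬w 0 = 0) ↔ (¬w 0 = 0 ∧ ¬chainForm w = 0) := by tauto
  simp only [hdup] at h
  simp only [chainZeroCount, Nat.lt_one_iff, Fin.val_eq_zero_iff, forall_eq, ne_eq]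
  omega

lemma chainZeroCount_succ_of_ne_zero {n k : ℕ} (hk0 : k ≠ 0) (hk : k ≤ n + 1) :
    chainZeroCount F (n + 1) (k + 1) + chainZeroCount F n k =
      (Fintype.card F - 1) ^ k * Fintype.card F ^ (n + 1 - k) := by
  have h := card_chainForm_cons (· ≠ 0) (fun w : Fin (n + 1) → F =>
    ∀ i : Fin (n + 1), (i : ℕ) < k → w i ≠ 0)
  have hsplit := card_filter_add_card_filter_not
    (s := {w : Fin (n + 1) → F | ∀ i : Fin (n + 1), (i : ℕ) < k → w i ≠ 0})
    (fun w => chainForm w = 0)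
  rw [filter_filter, filter_filter, card_forall_lt_ne_zero hk] at hsplit
  have hhead (w : Fin (n + 1) → F) (hw : ∀ i : Fin (n + 1), (i : ℕ) < k → w i ≠ 0) : w 0 ≠ 0 :=
    hw 0 (Nat.pos_of_ne_zero hk0)
  have hempty : #{w : Fin (n + 1) → F |
      (∀ i : Fin (n + 1), (i : ℕ) < k → w i ≠ 0) ∧ w 0 = 0 ∧ chainForm w = 0} = 0 :=
    card_eq_zero.2 (filter_false_of_mem fun w _ ⟨hw, h0, _⟩ => hhead w hw h0)
  have hsolved : #{w : Fin (n + 1) → F | (∀ i : Fin (n + 1), (i : ℕ) < k → w i ≠ 0) ∧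
      w 0 ≠ 0 ∧ -chainForm w / w 0 ^ 2 ≠ 0} =
      #{w : Fin (n + 1) → F | (∀ i : Fin (n + 1), (i : ℕ) < k → w i ≠ 0) ∧ ¬chainForm w = 0} :=
    congrArg card (filter_congr fun w _ => by
      constructor
      · rintro ⟨hw, -, hc⟩
        exact ⟨hw, fun h => hc (by simp [h])⟩
      · rintro ⟨hw, hc⟩
        exact ⟨hw, hhead w hw, by simpa [hhead w hw] using hc⟩)
  rw [hempty, hsolved, mul_zero, add_zero] at h
  simp only [chainZeroCount, forall_lt_succ_ne_zero_iff]
  omega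

lemma sum_chainZeroCount_three :
    ∑ k : Fin 5, (chainZeroCount F 3 k : ℤ) =
      5 * Fintype.card F ^ 3 - 10 * Fintype.card F ^ 2 + 10 * Fintype.card F - 4 := by
  have hq : 1 ≤ Fintype.card F := Fintype.card_pos
  have e00 := card_forall_lt_ne_zero (F := F) (m := 1) (k := 0) (by norm_num)
  have e01 := card_forall_lt_ne_zero (F := F) (m := 1) (k := 1) le_rfl
  rw [← chainZeroCount_zero] at e00 e01
  have z0 := card_head_zero_chainForm_zero_fin_one (F := F)
  have z1 := card_head_zero_chainForm_zero_succ (F := F) 0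
  have z2 := card_head_zero_chainForm_zero_succ (F := F) 1
  have e10 := chainZeroCount_succ_zero (F := F) 0
  have e11 := chainZeroCount_succ_one (F := F) 0
  have e12 := chainZeroCount_succ_of_ne_zero (F := F) (n := 0) (k := 1) one_ne_zero le_rfl
  have e21 := chainZeroCount_succ_one (F := F) 1
  have e22 := chainZeroCount_succ_of_ne_zero (F := F) (n := 1) (k := 1) one_ne_zero (by norm_num)
  have e23 := chainZeroCount_succ_of_ne_zero (F := F) (n := 1) (k := 2) two_ne_zero le_rfl
  have e30 := chainZeroCount_succ_zero (F := F) 2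
  have e31 := chainZeroCount_succ_one (F := F) 2
  have e32 := chainZeroCount_succ_of_ne_zero (F := F) (n := 2) (k := 1) one_ne_zero (by norm_num)
  have e33 := chainZeroCount_succ_of_ne_zero (F := F) (n := 2) (k := 2) two_ne_zero (by norm_num)
  have e34 := chainZeroCount_succ_of_ne_zero (F := F) (n := 2) (k := 3) three_ne_zero le_rfl
  simp only [Fin.sum_univ_five, Fin.val_zero, Fin.val_one, Fin.val_two]
  norm_num at *
  zify [hq] at *
  rw [z0] at e10 e11
  rw [z1, e00] at e21
  rw [z2, e10] at e30 e31
  linarith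

lemma card_kleinForm_first_zero (k : Fin 5) :
    #{x : Fin 5 → F | x k = 0 ∧ (∀ i < k, x i ≠ 0) ∧ kleinForm x = 0} = chainZeroCount F 3 k := by
  have h := card_filter_cons (· = 0) (fun z : Fin 4 → F =>
    (∀ i : Fin 4, (i : ℕ) < k → z i ≠ 0) ∧ chainForm z = 0)
  rw [filter_eq', if_pos (mem_univ _), card_singleton, one_mul] at h
  rw [chainZeroCount, ← h]
  apply card_nbij' (fun x m => x (k - m)) (fun y i => y (k - i))
  · intro x hx
    simp only [coe_filter, mem_univ, true_and, Set.mem_ofPred_eq] at hx ⊢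
    obtain ⟨h0, hlt, hK⟩ := hx
    have hy0 : x (k - 0) = 0 := by rwa [sub_zero]
    refine ⟨hy0, (forall_lt_iff_forall_sub_succ k).1 hlt, ?_⟩
    rw [← kleinForm_comp_sub_of_head_eq_zero k hy0]
    simpa using hK
  · intro y hy
    simp only [coe_filter, mem_univ, true_and, Set.mem_ofPred_eq] at hy ⊢
    obtain ⟨h0, hlt, hc⟩ := hy
    refine ⟨by rwa [sub_self], (forall_lt_iff_forall_sub_succ k).2 (by simpa [Fin.tail] using hlt),
      ?_⟩
    rwa [kleinForm_comp_sub_of_head_eq_zero k h0]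
  · intro x _
    simp
  · intro y _
    simp

end Chains

section Torus

def kleinTorusHom {G : Type*} [CommGroup G] : (Fin 5 → G) →* (Fin 5 → G) where
  toFun u i := u i ^ 2 * u (i + 1) / u 0 ^ 2
  map_one' := by ext; simp
  map_mul' u v := by
    ext i
    simp only [Pi.mul_apply, mul_pow, div_eq_mul_inv, mul_inv]
    ac_rfl

lemma kleinTorusHom_injective {G : Type*} [CommGroup G]
    (h : Function.Injective (· ^ 11 : G → G)) :
    Function.Injective (kleinTorusHom : (Fin 5 → G) → (Fin 5 → G)) := by
  refine (injective_iff_map_eq_one _).2 fun u hu => ?_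
  have e (i : Fin 5) : u (i + 1) = (u i ^ 2)⁻¹ * u 0 ^ 2 :=
    eq_inv_mul_of_mul_eq (div_eq_one.1 (congrFun hu i))
  have e0 := e 0; have e1 := e 1; have e2 := e 2; have e3 := e 3; have e4 := e 4
  simp only [zero_add, Fin.reduceAdd] at e0 e1 e2 e3 e4
  generalize hs : u 0 = s at e0 e1 e2 e3 e4
  have h1 : u 1 = 1 := by rw [e0, inv_mul_cancel]
  have h2 : u 2 = s ^ 2 := by rw [e1, h1]; group
  have h3 : u 3 = (s ^ 2)⁻¹ := by rw [e2, h2]; group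
  have h4 : u 4 = s ^ 6 := by rw [e3, h3]; group
  have h0 : s = ((s ^ 6) ^ 2)⁻¹ * s ^ 2 := by rw [← h4]; exact e4
  have hs1 : s = 1 := h <| calc
    s ^ 11 = s ^ 10 * s := by group
    _ = 1 ^ 11 := by nth_rewrite 2 [h0]; group
  ext i
  fin_cases i <;> simp [hs, h1, h2, h3, h4, hs1]

omit [Fintype F] [DecidableEq F] in
lemma kleinForm_units (u : Fin 5 → Fˣ) :
    kleinForm (fun i => (u i : F)) = (u 0 : F) ^ 2 * ∑ i, ((kleinTorusHom u i : Fˣ) : F) := by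
  rw [kleinForm, mul_sum]
  refine sum_congr rfl fun i _ => ?_
  simp only [kleinTorusHom, MonoidHom.coe_mk, OneHom.coe_mk, Units.val_div_eq_div_val,
    Units.val_mul, Units.val_pow_eq_pow_val]
  field_simp

lemma card_kleinForm_torus (h : (Nat.card Fˣ).Coprime 11) :
    #{x : Fin 5 → F | (∀ i, x i ≠ 0) ∧ kleinForm x = 0} =
      #{v : Fin 5 → Fˣ | ∑ i, (v i : F) = 0} := by
  rw [card_forall_ne_zero_eq_card_units]
  have hθ : Function.Bijective (kleinTorusHom : (Fin 5 → Fˣ) → (Fin 5 → Fˣ)) :=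
    Finite.injective_iff_bijective.1 (kleinTorusHom_injective h.pow_left_bijective.injective)
  refine card_equiv (Equiv.ofBijective _ hθ) fun u => ?_
  simp [kleinForm_units]

end Torus

theorem card_kleinForm_eq_zero (h : (Nat.card Fˣ).Coprime 11) :
    #{x : Fin 5 → F | kleinForm x = 0} = Fintype.card F ^ 4 := by
  rw [card_filter_eq_sum_first_zero, card_kleinForm_torus h]
  simp only [card_kleinForm_first_zero]
  have hq : 1 ≤ Fintype.card F := Fintype.card_pos
  have hboundary := sum_chainZeroCount_three (F := F)
  have s0 : #{v : Fin 0 → Fˣ | ∑ i, (v i : F) = 0} = 1 := by simp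
  have s1 := card_sum_units_eq_zero_succ (F := F) 0
  have s2 := card_sum_units_eq_zero_succ (F := F) 1
  have s3 := card_sum_units_eq_zero_succ (F := F) 2
  have s4 := card_sum_units_eq_zero_succ (F := F) 3
  have s5 := card_sum_units_eq_zero_succ (F := F) 4
  zify [hq] at *
  linear_combination hboundary + s5 - s4 + s3 - s2 + s1 - s0

instance fact_prime_eleven : Fact (Nat.Prime 11) := ⟨by norm_num⟩

lemma legendreSym_neg_eleven (p : ℕ) [Fact p.Prime] (hp : p ≠ 2) :
    legendreSym p (-11) = legendreSym 11 p := by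
  have hodd : p % 2 = 1 := Nat.odd_iff.1 ((Fact.out : p.Prime).odd_of_ne_two hp)
  rw [show (-11 : ℤ) = -1 * (11 : ℕ) by norm_num, legendreSym.mul, legendreSym.at_neg_one hp,
    legendreSym.quadratic_reciprocity' (by norm_num) hp, ZMod.χ₄_eq_neg_one_pow hodd,
    ← mul_assoc, ← pow_add, show p / 2 + 11 / 2 * (p / 2) = 2 * (3 * (p / 2)) by omega, pow_mul,
    neg_one_sq, one_pow, one_mul]

lemma isSquare_neg_eleven_of_dvd_sub_one (p : ℕ) [Fact p.Prime] (h : 11 ∣ p - 1) :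
    IsSquare (-11 : ZMod p) := by
  have hp := (Fact.out : p.Prime).two_le
  have hp2 : p ≠ 2 := by omega
  have hne : ((-11 : ℤ) : ZMod p) ≠ 0 := by
    rw [Int.cast_neg, neg_ne_zero, Int.cast_ofNat, ← Nat.cast_ofNat, ne_eq,
      ZMod.natCast_eq_zero_iff]
    intro h11
    have := (Nat.prime_dvd_prime_iff_eq Fact.out fact_prime_eleven.out).1 h11
    omega
  have key : legendreSym p (-11) = 1 := by
    rw [legendreSym_neg_eleven p hp2, legendreSym.mod, show (p : ℤ) % (11 : ℕ) = 1 by omega,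
      legendreSym.at_one]
  simpa using (legendreSym.eq_one_iff p hne).1 key

end KleinCubic

open KleinCubic in
theorem klein_cubic_count_Fp_general (p : ℕ) (hp : p.Prime)
    (hns : ¬ IsSquare (-11 : ZMod p)) :
    Nat.card {x : Fin 5 → ZMod p //
        (x 0) ^ 2 * x 1 + (x 1) ^ 2 * x 2 + (x 2) ^ 2 * x 3 + (x 3) ^ 2 * x 4
          + (x 4) ^ 2 * x 0 = 0} = p ^ 4 := by
  have := Fact.mk hp
  have hcop : (Nat.card (ZMod p)ˣ).Coprime 11 := by
    rw [Nat.card_units, Nat.card_zmod]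
    exact ((Nat.Prime.coprime_iff_not_dvd fact_prime_eleven.out).2
      fun h => hns (isSquare_neg_eleven_of_dvd_sub_one p h)).symm
  have hcount := card_kleinForm_eq_zero hcop
  rw [ZMod.card] at hcount
  rw [Nat.card_eq_fintype_card, Fintype.card_subtype, ← hcount]
  simp [kleinForm, Fin.sum_univ_five]

/-- For a prime `p ≥ 5`, `p ≠ 11`, such that `−11` is not a square in `𝔽_p`, the Klein
cubic `x₁²x₂ + x₂²x₃ + x₃²x₄ + x₄²x₅ + x₅²x₁ = 0` has exactly `p⁴` solutions in `𝔽_p⁵`;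
equivalently, the Klein cubic threefold has `1 + p + p² + p³` points in `ℙ⁴(𝔽_p)`. -/
theorem klein_cubic_count_Fp (p : ℕ) (hp : p.Prime) (hp5 : 5 ≤ p) (hp11 : p ≠ 11)
    (hns : ¬ IsSquare (-11 : ZMod p)) :
    Nat.card {x : Fin 5 → ZMod p //
        (x 0) ^ 2 * x 1 + (x 1) ^ 2 * x 2 + (x 2) ^ 2 * x 3 + (x 3) ^ 2 * x 4
          + (x 4) ^ 2 * x 0 = 0} = p ^ 4 :=
  klein_cubic_count_Fp_general p hp hns
end
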